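/- arXiv:2012.00285 — 8 statements merged into one kernel-verified Lean document; each statement's English description precedes it below -/
import Mathlib

section
/- For positive integers m and n₀ with n₀ ≥ 0, the following identity holds: (1/m) · (m! n₀!)/((m+n₀)!) = Σ_{n > n₀} (1/n) · (m! n!)/((m+n)!), where the sum is over integers n > n₀. -/
/-!
Write `c n = m! n! / (m + n)!`. Since `c (n + 1) = (n + 1) / (m + n + 1) * c n`, the summand is a
difference, `c (n + 1) / (n + 1) = (c n - c (n + 1)) / m`, so the series telescopes to `c n₀ / m`
because `c n ≤ m! / (n + 1)` tends to `0`.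
-/

open Filter Topology Finset Nat

theorem hasSum_sub_succ_of_antitone {f : ℕ → ℝ} {l : ℝ} (hf : Antitone f)
    (hl : Tendsto f atTop (𝓝 l)) : HasSum (fun n ↦ f n - f (n + 1)) (f 0 - l) := by
  rw [hasSum_iff_tendsto_nat_of_nonneg fun n ↦ sub_nonneg.2 (hf n.le_succ)]
  simpa only [sum_range_sub'] using tendsto_const_nhds.sub hl

noncomputable def connector (m n : ℕ) : ℝ := ((m ! * n ! : ℕ) : ℝ) / ((m + n)! : ℝ)

lemma connector_nonneg (m n : ℕ) : 0 ≤ connector m n := by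
  unfold connector; positivity

lemma connector_succ (m n : ℕ) :
    connector m (n + 1) = (n + 1) / (m + n + 1) * connector m n := by
  unfold connector
  push_cast [← add_assoc, factorial_succ]
  field_simp

lemma connector_le {m : ℕ} (n : ℕ) (hm : 0 < m) : connector m n ≤ m ! / (n + 1) := by
  have h : (n + 1)! ≤ (m + n)! := factorial_le (by omega)
  rw [factorial_succ] at h
  unfold connector
  rw [div_le_div_iff₀ (by positivity) (by positivity)]
  push_cast
  calc (m ! * n ! : ℝ) * (n + 1) = m ! * ((n + 1) * n ! : ℕ) := by push_cast; ring
    _ ≤ m ! * (m + n)! := by gcongr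

lemma tendsto_connector_atTop {m : ℕ} (hm : 0 < m) :
    Tendsto (connector m) atTop (𝓝 0) := by
  refine squeeze_zero (connector_nonneg m) (fun n ↦ connector_le n hm) ?_
  simpa [Function.comp_def] using
    (tendsto_const_div_atTop_nhds_zero_nat (m ! : ℝ)).comp (tendsto_add_atTop_nat 1)

lemma connector_div_sub_connector_div {m : ℕ} (hm : 0 < m) (n : ℕ) :
    connector m n / m - connector m (n + 1) / m = connector m (n + 1) / (n + 1) := by
  rw [connector_succ]
  field_simp
  ring

lemma hasSum_connector {m : ℕ} (hm : 0 < m) (n₀ : ℕ) :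
    HasSum (fun k ↦ connector m (n₀ + 1 + k) / (n₀ + 1 + k)) (connector m n₀ / m) := by
  set f : ℕ → ℝ := fun k ↦ connector m (n₀ + k) / m
  have hstep (k : ℕ) : f k - f (k + 1) = connector m (n₀ + 1 + k) / (n₀ + 1 + k) := by
    simp only [f, ← add_assoc, connector_div_sub_connector_div hm]
    push_cast; ring_nf
  have hanti : Antitone f := antitone_nat_of_succ_le fun k ↦ by
    rw [← sub_nonneg, hstep]
    exact div_nonneg (connector_nonneg _ _) (by positivity)
  have hlim : Tendsto f atTop (𝓝 0) := by
    simpa [f, add_comm] using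
      ((tendsto_connector_atTop hm).comp (tendsto_add_atTop_nat n₀)).div_const (m : ℝ)
  simpa [hstep, f] using hasSum_sub_succ_of_antitone hanti hlim

theorem stmt_0 (m n₀ : ℕ) (hm : 0 < m) :
    (1 / (m : ℝ)) * ((m.factorial * n₀.factorial : ℕ) : ℝ) / ((m + n₀).factorial : ℝ) =
      ∑' k : ℕ, (1 / ((n₀ + 1 + k : ℕ) : ℝ)) *
        ((m.factorial * (n₀ + 1 + k).factorial : ℕ) : ℝ) / ((m + (n₀ + 1 + k)).factorial : ℝ) := by
  have hterm (a n : ℕ) :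
      1 / (a : ℝ) * ((m ! * n ! : ℕ) : ℝ) / (m + n)! = connector m n / a := by
    unfold connector; ring
  simp_rw [hterm]
  push_cast
  exact (hasSum_connector hm n₀).tsum_eq.symm
end

section
/- For a complex number α with Re(α) > 0 and nonnegative integers m_r and n_{s-1} (taking the Gamma-function convention below), the telescoping identity holds: (1/(m_r+α)) · Γ(m_r+α+1)Γ(n_{s-1}+α+1)/Γ(m_r+n_{s-1}+2α+1) = Σ_{n > n_{s-1}} (1/(n+α)) · Γ(m_r+α+1)Γ(n+α+1)/Γ(m_r+n+2α+1), where the sum is over integers n > n_{s-1}. More generally, the same identity is allowed with n_{s-1} = -1. -/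
/-! With `c = m + α` and `s = n₀ + α + 1`, the left side is the Beta integral `B(s, c)` and the
`k`-th term of the series is `B(s + k, c + 1)`. The identity `B(s, c) = ∑ₖ B(s + k, c + 1)` comes
from writing `(1 - t)^(c - 1) = (1 - t)^c ∑ₖ tᵏ` in the Beta integrand and exchanging sum and
integral by dominated convergence; the dominating series is the same expansion taken in norm. -/

open Complex MeasureTheory Set Filter Interval

lemma hasSum_one_sub_mul_pow {t : ℝ} (h0 : 0 ≤ t) (h1 : t < 1) :
    HasSum (fun k : ℕ => (1 - t) * t ^ k) 1 := by
  simpa [mul_inv_cancel₀ (sub_ne_zero.mpr h1.ne')] using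
    (hasSum_geometric_of_lt_one h0 h1).mul_left (1 - t)

lemma ae_mem_Ioo_of_mem_uIoc_zero_one : ∀ᵐ t : ℝ, t ∈ Ι 0 1 → t ∈ Ioo 0 1 := by
  filter_upwards [(countable_singleton (1 : ℝ)).ae_notMem volume] with t ht htI
  rw [uIoc_of_le zero_le_one] at htI
  exact ⟨htI.1, htI.2.lt_of_ne ht⟩

namespace Complex

lemma cpow_add_nat_sub_one_mul_one_sub_cpow {t : ℝ} (ht : t ∈ Ioo 0 1) (u v : ℂ) (k : ℕ) :
    (t : ℂ) ^ (u + k - 1) * (1 - (t : ℂ)) ^ (v + 1 - 1) =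
      (t : ℂ) ^ (u - 1) * (1 - (t : ℂ)) ^ (v - 1) * ((1 - t) * t ^ k : ℝ) := by
  have ht0 : (t : ℂ) ≠ 0 := ofReal_ne_zero.mpr ht.1.ne'
  have ht1 : (1 - t : ℂ) ≠ 0 := by
    rw [← ofReal_one, ← ofReal_sub]; exact ofReal_ne_zero.mpr (sub_ne_zero.mpr ht.2.ne')
  have hv : (1 - t : ℂ) ^ v = (1 - t) ^ (v - 1) * (1 - t) := by simpa using cpow_add (v - 1) 1 ht1
  rw [add_sub_cancel_right, hv, add_sub_right_comm, cpow_add _ _ ht0, cpow_natCast]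
  push_cast
  ring

theorem hasSum_betaIntegral_add_nat {u v : ℂ} (hu : 0 < u.re) (hv : 0 < v.re) :
    HasSum (fun k : ℕ => betaIntegral (u + k) (v + 1)) (betaIntegral u v) := by
  set f : ℝ → ℂ := fun t => (t : ℂ) ^ (u - 1) * (1 - (t : ℂ)) ^ (v - 1)
  have huk (k : ℕ) : 0 < (u + k).re := by simpa using add_pos_of_pos_of_nonneg hu k.cast_nonneg
  have hv1 : 0 < (v + 1).re := by simpa using add_pos hv one_pos
  refine intervalIntegral.hasSum_integral_of_dominated_convergence
    (fun k t => ‖f t‖ * ((1 - t) * t ^ k))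
    (fun k => (betaIntegral_convergent (huk k) hv1).def'.aestronglyMeasurable) ?_ ?_ ?_ ?_
  · intro k
    filter_upwards [ae_mem_Ioo_of_mem_uIoc_zero_one] with t ht htI
    have ht := ht htI
    rw [cpow_add_nat_sub_one_mul_one_sub_cpow ht, norm_mul, norm_real, Real.norm_of_nonneg]
    exact mul_nonneg (sub_nonneg.mpr ht.2.le) (pow_nonneg ht.1.le k)
  · filter_upwards [ae_mem_Ioo_of_mem_uIoc_zero_one] with t ht htI
    have ht := ht htI
    exact ((hasSum_one_sub_mul_pow ht.1.le ht.2).mul_left _).summable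
  · refine (betaIntegral_convergent hu hv).norm.congr_ae ?_
    rw [EventuallyEq, ae_restrict_iff' measurableSet_uIoc]
    filter_upwards [ae_mem_Ioo_of_mem_uIoc_zero_one] with t ht htI
    have ht := ht htI
    rw [((hasSum_one_sub_mul_pow ht.1.le ht.2).mul_left _).tsum_eq, mul_one]
  · filter_upwards [ae_mem_Ioo_of_mem_uIoc_zero_one] with t ht htI
    have ht := ht htI
    simp_rw [cpow_add_nat_sub_one_mul_one_sub_cpow ht]
    simpa using ((hasSum_one_sub_mul_pow ht.1.le ht.2).mapL ofRealCLM).mul_left (f t)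

lemma betaIntegral_eq_one_div_mul_Gamma_add_one {a b : ℂ} (ha : 0 < a.re) (hb : 0 < b.re) :
    betaIntegral a b = 1 / a * (Gamma (a + 1) * Gamma b / Gamma (a + b)) := by
  have ha0 : a ≠ 0 := fun h => by simp [h] at ha
  rw [betaIntegral_eq_Gamma_mul_div a b ha hb, Gamma_add_one a ha0]
  field_simp

end Complex

theorem stmt_3 (α : ℂ) (hα : 0 < α.re) (m : ℕ) (n₀ : ℤ) (hn₀ : -1 ≤ n₀) :
    (1 / ((m : ℂ) + α)) *
        (Complex.Gamma ((m : ℂ) + α + 1) * Complex.Gamma ((n₀ : ℂ) + α + 1) /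
          Complex.Gamma ((m : ℂ) + (n₀ : ℂ) + 2 * α + 1)) =
      ∑' k : ℕ, (1 / (((n₀ + 1 + k : ℤ) : ℂ) + α)) *
        (Complex.Gamma ((m : ℂ) + α + 1) * Complex.Gamma (((n₀ + 1 + k : ℤ) : ℂ) + α + 1) /
          Complex.Gamma ((m : ℂ) + ((n₀ + 1 + k : ℤ) : ℂ) + 2 * α + 1)) := by
  have hc : 0 < ((m : ℂ) + α).re := by simpa using add_pos_of_nonneg_of_pos m.cast_nonneg hα
  have hs : 0 < ((n₀ : ℂ) + α + 1).re := by
    have : (-1 : ℝ) ≤ n₀ := by exact_mod_cast hn₀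
    simp only [add_re, intCast_re, one_re]
    linarith
  have hshift (k : ℕ) : (n₀ : ℂ) + α + 1 + k = ((n₀ + 1 + k : ℤ) : ℂ) + α := by push_cast; ring
  calc _ = betaIntegral (m + α) (n₀ + α + 1) := by
          rw [betaIntegral_eq_one_div_mul_Gamma_add_one hc hs]
          ring_nf
    _ = ∑' k : ℕ, betaIntegral (n₀ + α + 1 + k) (m + α + 1) :=
          (betaIntegral_symm _ _).trans (hasSum_betaIntegral_add_nat hs hc).tsum_eq.symm
    _ = _ := tsum_congr fun k => by
          have hsk : 0 < ((n₀ : ℂ) + α + 1 + k).re := by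
            simpa using add_pos_of_pos_of_nonneg hs k.cast_nonneg
          rw [betaIntegral_eq_one_div_mul_Gamma_add_one hsk (by simpa using add_pos hc one_pos),
            hshift]
          ring_nf
end

section
/- For a complex number α with Re(α) > 0, a nonnegative integer n_s, and an integer m_{r-1} ≥ -1, the telescoping identity holds: Σ_{m > m_{r-1}} (1/(m+α)) · Γ(m+α+1)Γ(n_s+α+1)/Γ(m+n_s+2α+1) = (1/(n_s+α)) · Γ(m_{r-1}+α+1)Γ(n_s+α+1)/Γ(m_{r-1}+n_s+2α+1), where the sum is over integers m > m_{r-1}. -/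
open Set Complex
open scoped Interval

/-!
Each summand is `B(m + α, n_s + α + 1)` and the right-hand side is `B(m₀ + α + 1, n_s + α)`,
by `Γ(u + 1) = u Γ(u)` and `B(u, v) = Γ(u) Γ(v) / Γ(u + v)`. Expanding `(1 - x)⁻¹` as a geometric
series inside Euler's integral gives `B(a, b) = ∑ₖ B(a + k, b + 1)`; the series of norms of the
integrands is again geometric, with sum the norm of the integrand of `B(a, b)`, which is
integrable, so dominated convergence allows the exchange of sum and integral.
-/

namespace Complex

lemma hasSum_geometric_of_mem_Ioo (c : ℂ) {x : ℝ} (hx : x ∈ Ioo (0 : ℝ) 1) :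
    HasSum (fun n : ℕ => c * (x : ℂ) ^ n) (c * (1 - (x : ℂ))⁻¹) ∧
      HasSum (fun n : ℕ => ‖c * (x : ℂ) ^ n‖) ‖c * (1 - (x : ℂ))⁻¹‖ := by
  have h1x : 0 < 1 - x := sub_pos.2 hx.2
  refine ⟨(hasSum_geometric_of_norm_lt_one ?_).mul_left c, ?_⟩
  · simpa [abs_of_pos hx.1] using hx.2
  · have hnorm : ‖c * (1 - x : ℂ)⁻¹‖ = ‖c‖ * (1 - x)⁻¹ := by
      rw [norm_mul, norm_inv, ← ofReal_one, ← ofReal_sub, norm_real, Real.norm_of_nonneg h1x.le]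
    rw [hnorm]
    simpa [norm_mul, norm_pow, abs_of_pos hx.1] using
      (hasSum_geometric_of_lt_one hx.1.le hx.2).mul_left ‖c‖

lemma betaIntegrand_add_nat {x : ℝ} (hx : x ∈ Ioo (0 : ℝ) 1) (a b : ℂ) (n : ℕ) :
    (x : ℂ) ^ (a + n - 1) * (1 - x) ^ (b + 1 - 1) =
      (x : ℂ) ^ (a - 1) * (1 - x) ^ b * (x : ℂ) ^ n := by
  rw [add_sub_cancel_right, add_sub_right_comm, cpow_add _ _ (ofReal_ne_zero.2 hx.1.ne'),
    cpow_natCast]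
  ring

lemma betaIntegrand_mul_inv_one_sub {x : ℝ} (hx : x ∈ Ioo (0 : ℝ) 1) (a b : ℂ) :
    (x : ℂ) ^ (a - 1) * (1 - x) ^ b * (1 - (x : ℂ))⁻¹ =
      (x : ℂ) ^ (a - 1) * (1 - x) ^ (b - 1) := by
  have h1x : (1 - x : ℂ) ≠ 0 := by
    rw [← ofReal_one, ← ofReal_sub, ofReal_ne_zero]; exact (sub_pos.2 hx.2).ne'
  rw [cpow_sub _ _ h1x, cpow_one, mul_assoc, div_eq_mul_inv]

theorem hasSum_betaIntegral_add_nat_s4 {a b : ℂ} (ha : 0 < a.re) (hb : 0 < b.re) :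
    HasSum (fun n : ℕ => betaIntegral (a + n) (b + 1)) (betaIntegral a b) := by
  have hae : ∀ᵐ x ∂MeasureTheory.volume, x ∈ Ι (0 : ℝ) 1 → x ∈ Ioo (0 : ℝ) 1 := by
    filter_upwards [(countable_singleton (1 : ℝ)).ae_notMem _] with x hx1 hx
    rw [uIoc_of_le zero_le_one] at hx
    exact ⟨hx.1, lt_of_le_of_ne hx.2 hx1⟩
  refine intervalIntegral.hasSum_integral_of_dominated_convergence
    (fun n x => ‖(x : ℂ) ^ (a + n - 1) * (1 - x) ^ (b + 1 - 1)‖) (fun n => ?_)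
    (fun n => .of_forall fun _ _ => le_rfl) (hae.mono fun x hmem hxI => ?_) ?_
    (hae.mono fun x hmem hxI => ?_)
  · have hn : 0 < (a + n).re := by simp; positivity
    have hb1 : 0 < (b + 1).re := by simp; positivity
    exact (betaIntegral_convergent hn hb1).aestronglyMeasurable_restrict_uIoc
  · simp_rw [betaIntegrand_add_nat (hmem hxI)]
    exact (hasSum_geometric_of_mem_Ioo _ (hmem hxI)).2.summable
  · refine (betaIntegral_convergent ha hb).norm.congr_uIoo fun x hx => ?_
    rw [uIoo_of_le zero_le_one] at hx
    simp_rw [betaIntegrand_add_nat hx, ← betaIntegrand_mul_inv_one_sub hx]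
    exact (hasSum_geometric_of_mem_Ioo _ hx).2.tsum_eq.symm
  · simp_rw [betaIntegrand_add_nat (hmem hxI), ← betaIntegrand_mul_inv_one_sub (hmem hxI)]
    exact (hasSum_geometric_of_mem_Ioo _ (hmem hxI)).1

lemma betaIntegral_eq_one_div_mul_Gamma_add_one_s4 {u v : ℂ} (hu : 0 < u.re) (hv : 0 < v.re) :
    betaIntegral u v = 1 / u * (Gamma (u + 1) * Gamma v / Gamma (u + v)) := by
  have hu0 : u ≠ 0 := fun h => by simp [h] at hu
  rw [betaIntegral_eq_Gamma_mul_div _ _ hu hv, Gamma_add_one _ hu0]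
  field_simp

end Complex

theorem stmt_4 (α : ℂ) (hα : 0 < α.re) (ns : ℕ) (m₀ : ℤ) (hm₀ : -1 ≤ m₀) :
    (∑' k : ℕ, (1 / (((m₀ + 1 + k : ℤ) : ℂ) + α)) *
        (Complex.Gamma (((m₀ + 1 + k : ℤ) : ℂ) + α + 1) * Complex.Gamma ((ns : ℂ) + α + 1) /
          Complex.Gamma (((m₀ + 1 + k : ℤ) : ℂ) + (ns : ℂ) + 2 * α + 1))) =
      (1 / ((ns : ℂ) + α)) *
        (Complex.Gamma ((m₀ : ℂ) + α + 1) * Complex.Gamma ((ns : ℂ) + α + 1) /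
          Complex.Gamma ((m₀ : ℂ) + (ns : ℂ) + 2 * α + 1)) := by
  have hA : 0 < ((m₀ + 1 : ℤ) + α).re := by
    have : (-1 : ℝ) ≤ m₀ := by exact_mod_cast hm₀
    simp; linarith
  have hw : 0 < ((ns : ℂ) + α).re := by simp; positivity
  have hterm (k : ℕ) : 0 < (((m₀ + 1 : ℤ) + α) + k).re := by simp at hA ⊢; positivity
  have hw1 : 0 < ((ns : ℂ) + α + 1).re := by simp; positivity
  have hsum := hasSum_betaIntegral_add_nat_s4 hA hw
  rw [← betaIntegral_symm, betaIntegral_eq_one_div_mul_Gamma_add_one_s4 hw hA] at hsum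
  convert hsum.tsum_eq using 1
  · congr 1 with k
    rw [betaIntegral_eq_one_div_mul_Gamma_add_one_s4 (hterm k) hw1]
    push_cast
    ring_nf
  · push_cast
    ring_nf
end

section
/- For a complex number α with Re(α) > 0, a complex number x with Re(α - x) > 0, and nonnegative integers m_r, n_{s-1} (or n_{s-1} = -1), one has (1/(m_r+α)) · Γ(m_r+α-x+1)Γ(n_{s-1}+α-x+1)/Γ(m_r+n_{s-1}+2α-x+1) = Σ_{n > n_{s-1}} (1/(n+α-x)) · Γ(m_r+α-x+1)Γ(n+α-x+1)/Γ(m_r+n+2α-x+1), where the sum is over integers n > n_{s-1}. -/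
/-!
Since `Γ(b + 1) = b Γ(b)`, the ratio `G(b) = Γ(b) / Γ(b + γ)` satisfies
`G(b) - G(b + 1) = (γ / b) G(b + 1)`, so the series telescopes to `G(z) / γ` as soon as
`G(z + k) → 0`. Both this decay and absolute convergence come from comparing with real arguments:
the Beta integral gives `‖Γ(v) / Γ(v + w)‖ ≤ C · Γ(Re v) / Γ(Re v + Re w)`, and for real `a, d > 0`
the decreasing sequence `Γ(a + k) / Γ(a + k + d)` must tend to `0`, since a positive limit `L`
would make its telescoping differences dominate the divergent series `d L / (a + k)`.
-/

open Complex Filter Finset Topology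

theorem Antitone.summable_sub_succ {h : ℕ → ℝ} (hh : Antitone h) (h0 : ∀ k, 0 ≤ h k) :
    Summable fun k => h k - h (k + 1) :=
  summable_of_sum_range_le (c := h 0) (fun k => sub_nonneg.2 (hh k.le_succ)) fun n => by
    rw [sum_range_sub']
    linarith [h0 n]

theorem antitone_of_sub_succ_eq_mul {h c : ℕ → ℝ} (h0 : ∀ k, 0 ≤ h k) (hc0 : ∀ k, 0 ≤ c k)
    (hstep : ∀ k, h k - h (k + 1) = c k * h (k + 1)) : Antitone h :=
  antitone_nat_of_succ_le fun k => sub_nonneg.1 <| hstep k ▸ mul_nonneg (hc0 k) (h0 (k + 1))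

theorem summable_mul_of_sub_succ_eq_mul {h c : ℕ → ℝ} (h0 : ∀ k, 0 ≤ h k) (hc0 : ∀ k, 0 ≤ c k)
    (hstep : ∀ k, h k - h (k + 1) = c k * h (k + 1)) : Summable fun k => c k * h (k + 1) :=
  ((antitone_of_sub_succ_eq_mul h0 hc0 hstep).summable_sub_succ h0).congr hstep

theorem tendsto_zero_of_sub_succ_eq_mul {h c : ℕ → ℝ} (h0 : ∀ k, 0 ≤ h k) (hc0 : ∀ k, 0 ≤ c k)
    (hc : ¬Summable c) (hstep : ∀ k, h k - h (k + 1) = c k * h (k + 1)) :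
    Tendsto h atTop (𝓝 0) := by
  have hanti := antitone_of_sub_succ_eq_mul h0 hc0 hstep
  have hbdd : BddBelow (Set.range h) := ⟨0, Set.forall_mem_range.2 h0⟩
  obtain hL | hL := (le_ciInf h0 : 0 ≤ ⨅ k, h k).eq_or_lt
  · exact hL ▸ tendsto_atTop_ciInf hanti hbdd
  refine absurd ?_ hc
  refine ((hanti.summable_sub_succ h0).div_const (⨅ k, h k)).of_nonneg_of_le hc0 fun k => ?_
  rw [le_div_iff₀ hL, hstep]
  exact mul_le_mul_of_nonneg_left (ciInf_le hbdd _) (hc0 k)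

namespace Real

theorem Gamma_div_Gamma_add_sub_succ {b d : ℝ} (hb : b ≠ 0) (hbd : Gamma (b + d) ≠ 0) :
    Gamma b / Gamma (b + d) - Gamma (b + 1) / Gamma (b + 1 + d) =
      d / b * (Gamma (b + 1) / Gamma (b + 1 + d)) := by
  -- `Gamma 0 = 0` in Mathlib, so `hbd` also rules out `b + d = 0`
  have hbd' : b + d ≠ 0 := by rintro h; simp [h] at hbd
  rw [add_right_comm, Gamma_add_one hb, Gamma_add_one hbd']
  field_simp
  ring

theorem not_summable_div_add_nat {a d : ℝ} (ha : 0 < a) (hd : d ≠ 0) :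
    ¬Summable fun k : ℕ => d / (a + k) := fun hs =>
  lt_irrefl 1 <| (summable_one_div_nat_add_rpow a 1).1 <| (hs.div_const d).congr fun k => by
    rw [rpow_one, abs_of_pos (by positivity), add_comm, div_div_cancel_left' hd, one_div]

variable {a d : ℝ}

theorem Gamma_div_Gamma_add_nat_pos (ha : 0 < a) (hd : 0 < d) (k : ℕ) :
    0 < Gamma (a + k) / Gamma (a + k + d) :=
  div_pos (Gamma_pos_of_pos (by positivity)) (Gamma_pos_of_pos (by positivity))

theorem Gamma_div_Gamma_add_nat_sub_succ (ha : 0 < a) (hd : 0 < d) (k : ℕ) :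
    Gamma (a + k) / Gamma (a + k + d) - Gamma (a + ↑(k + 1)) / Gamma (a + ↑(k + 1) + d) =
      d / (a + k) * (Gamma (a + ↑(k + 1)) / Gamma (a + ↑(k + 1) + d)) := by
  push_cast
  rw [← add_assoc]
  exact Gamma_div_Gamma_add_sub_succ (by positivity) (Gamma_pos_of_pos (by positivity)).ne'

theorem tendsto_Gamma_div_Gamma_add_nat (ha : 0 < a) (hd : 0 < d) :
    Tendsto (fun k : ℕ => Gamma (a + k) / Gamma (a + k + d)) atTop (𝓝 0) :=
  tendsto_zero_of_sub_succ_eq_mul (fun k => (Gamma_div_Gamma_add_nat_pos ha hd k).le)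
    (fun k => by positivity) (not_summable_div_add_nat ha hd.ne')
    (Gamma_div_Gamma_add_nat_sub_succ ha hd)

theorem summable_one_div_add_nat_mul_Gamma_div_Gamma_add_nat (ha : 0 < a) (hd : 0 < d) :
    Summable fun k : ℕ => 1 / (a + k) * (Gamma (a + ↑(k + 1)) / Gamma (a + ↑(k + 1) + d)) := by
  refine ((summable_mul_of_sub_succ_eq_mul (fun k => (Gamma_div_Gamma_add_nat_pos ha hd k).le)
    (fun k => by positivity) (Gamma_div_Gamma_add_nat_sub_succ ha hd)).div_const d).congr
    fun k => ?_
  field_simp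

end Real

namespace Complex

theorem Gamma_div_Gamma_add_sub_succ {b d : ℂ} (hb : b ≠ 0) (hbd : Gamma (b + d) ≠ 0) :
    Gamma b / Gamma (b + d) - Gamma (b + 1) / Gamma (b + 1 + d) =
      d / b * (Gamma (b + 1) / Gamma (b + 1 + d)) := by
  have hbd' : b + d ≠ 0 := by rintro h; simp [h] at hbd
  rw [add_right_comm, Gamma_add_one b hb, Gamma_add_one _ hbd']
  field_simp
  ring

theorem betaIntegral_ofReal (p q : ℝ) :
    betaIntegral p q = ∫ t in (0 : ℝ)..1, ((t ^ (p - 1) * (1 - t) ^ (q - 1) : ℝ) : ℂ) := by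
  refine intervalIntegral.integral_congr fun t ht => ?_
  rw [Set.uIcc_of_le zero_le_one] at ht
  push_cast
  rw [ofReal_cpow ht.1, ofReal_cpow (sub_nonneg.2 ht.2)]
  push_cast
  ring

theorem norm_betaIntegrand {t : ℝ} (ht : t ∈ Set.Ioo 0 1) (u v : ℂ) :
    ‖(t : ℂ) ^ (u - 1) * (1 - (t : ℂ)) ^ (v - 1)‖ =
      t ^ (u.re - 1) * (1 - t) ^ (v.re - 1) := by
  rw [norm_mul, norm_cpow_eq_rpow_re_of_pos ht.1, ← ofReal_one, ← ofReal_sub,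
    norm_cpow_eq_rpow_re_of_pos (sub_pos.2 ht.2)]
  simp

theorem norm_betaIntegral_le {u v : ℂ} (hu : 0 < u.re) (hv : 0 < v.re) :
    ‖betaIntegral u v‖ ≤ ‖betaIntegral u.re v.re‖ := by
  set g : ℝ → ℝ := fun t => t ^ (u.re - 1) * (1 - t) ^ (v.re - 1)
  have hg : IntervalIntegrable g MeasureTheory.volume 0 1 := by
    refine (betaIntegral_convergent (u := u.re) (v := v.re) (by simpa) (by simpa)).norm.congr_uIoo
      fun t ht => ?_
    rw [Set.uIoo_of_le zero_le_one] at ht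
    simpa using norm_betaIntegrand ht u.re v.re
  have hg0 : 0 ≤ ∫ t in (0 : ℝ)..1, g t :=
    intervalIntegral.integral_nonneg zero_le_one fun t ht =>
      mul_nonneg (Real.rpow_nonneg ht.1 _) (Real.rpow_nonneg (sub_nonneg.2 ht.2) _)
  rw [betaIntegral_ofReal, intervalIntegral.integral_ofReal, norm_real, Real.norm_of_nonneg hg0]
  refine intervalIntegral.norm_integral_le_of_norm_le zero_le_one ?_ hg
  filter_upwards [MeasureTheory.volume.ae_ne 1] with t ht1 ht
  exact (norm_betaIntegrand ⟨ht.1, ht.2.lt_of_ne ht1⟩ u v).le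

theorem norm_Gamma_div_Gamma_add_le {v w : ℂ} (hv : 0 < v.re) (hw : 0 < w.re) :
    ‖Gamma v / Gamma (v + w)‖ ≤
      Real.Gamma v.re / Real.Gamma (v.re + w.re) * (Real.Gamma w.re / ‖Gamma w‖) := by
  have hΓw : Gamma w ≠ 0 := Gamma_ne_zero_of_re_pos hw
  have hbeta : Gamma v / Gamma (v + w) = betaIntegral v w / Gamma w := by
    rw [betaIntegral_eq_Gamma_mul_div v w hv hw]
    field_simp
  have hbeta_re : ‖betaIntegral v.re w.re‖ =
      Real.Gamma v.re * Real.Gamma w.re / Real.Gamma (v.re + w.re) := by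
    rw [betaIntegral_eq_Gamma_mul_div _ _ (by simpa) (by simpa), ← ofReal_add, Gamma_ofReal,
      Gamma_ofReal, Gamma_ofReal, ← ofReal_mul, ← ofReal_div, norm_real, Real.norm_of_nonneg]
    exact (div_pos (mul_pos (Real.Gamma_pos_of_pos hv) (Real.Gamma_pos_of_pos hw))
      (Real.Gamma_pos_of_pos (add_pos hv hw))).le
  rw [hbeta, norm_div]
  calc ‖betaIntegral v w‖ / ‖Gamma w‖ ≤ ‖betaIntegral v.re w.re‖ / ‖Gamma w‖ := by
        gcongr
        exact norm_betaIntegral_le hv hw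
    _ = _ := by rw [hbeta_re]; ring

theorem hasSum_Gamma_div_Gamma_add {z γ : ℂ} (hz : 0 < z.re) (hγ : 0 < γ.re) :
    HasSum (fun k : ℕ => 1 / (z + k) * (Gamma (z + k + 1) / Gamma (z + k + 1 + γ)))
      (1 / γ * (Gamma z / Gamma (z + γ))) := by
  set G : ℕ → ℂ := fun k => Gamma (z + k) / Gamma (z + k + γ)
  set C := Real.Gamma γ.re / ‖Gamma γ‖
  have hre : ∀ k : ℕ, 0 < (z + k).re := fun k => by simp only [add_re, natCast_re]; positivity
  have hG_succ : ∀ k : ℕ, G (k + 1) = Gamma (z + k + 1) / Gamma (z + k + 1 + γ) := by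
    simp [G, add_assoc]
  have hstep : ∀ k : ℕ, 1 / (z + k) * (Gamma (z + k + 1) / Gamma (z + k + 1 + γ)) =
      1 / γ * (G k - G (k + 1)) := by
    intro k
    have hzk : z + k ≠ 0 := by intro h; simpa [h] using hre k
    have hγ0 : γ ≠ 0 := by rintro rfl; simp at hγ
    rw [hG_succ, Gamma_div_Gamma_add_sub_succ hzk
      (Gamma_ne_zero_of_re_pos (by rw [add_re]; linarith [hre k]))]
    field_simp
  have hG_le : ∀ k : ℕ,
      ‖G k‖ ≤ Real.Gamma (z.re + k) / Real.Gamma (z.re + k + γ.re) * C := by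
    intro k
    simpa [G, C, norm_div] using norm_Gamma_div_Gamma_add_le (hre k) hγ
  have hG : Tendsto G atTop (𝓝 0) :=
    squeeze_zero_norm hG_le <| by
      simpa using (Real.tendsto_Gamma_div_Gamma_add_nat hz hγ).mul_const C
  have hsum : Summable fun k : ℕ =>
      1 / (z + k) * (Gamma (z + k + 1) / Gamma (z + k + 1 + γ)) := by
    refine ((Real.summable_one_div_add_nat_mul_Gamma_div_Gamma_add_nat hz hγ).mul_right
      C).of_norm_bounded fun k => ?_
    rw [← hG_succ, norm_mul, mul_assoc]
    gcongr
    · rw [norm_div, norm_one]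
      gcongr
      simpa using re_le_norm (z + k)
    · simpa using hG_le (k + 1)
  rw [hsum.hasSum_iff_tendsto_nat]
  simp_rw [hstep, ← mul_sum, sum_range_sub']
  simpa [G] using (tendsto_const_nhds.sub hG).const_mul (1 / γ)

end Complex

theorem stmt_5 (α x : ℂ) (hα : 0 < α.re) (hαx : 0 < (α - x).re)
    (m : ℕ) (n₀ : ℤ) (hn₀ : -1 ≤ n₀) :
    (1 / ((m : ℂ) + α)) *
        (Complex.Gamma ((m : ℂ) + α - x + 1) * Complex.Gamma ((n₀ : ℂ) + α - x + 1) /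
          Complex.Gamma ((m : ℂ) + (n₀ : ℂ) + 2 * α - x + 1)) =
      ∑' k : ℕ, (1 / (((n₀ + 1 + k : ℤ) : ℂ) + α - x)) *
        (Complex.Gamma ((m : ℂ) + α - x + 1) * Complex.Gamma (((n₀ + 1 + k : ℤ) : ℂ) + α - x + 1) /
          Complex.Gamma ((m : ℂ) + ((n₀ + 1 + k : ℤ) : ℂ) + 2 * α - x + 1)) := by
  have hn₀' : (-1 : ℝ) ≤ n₀ := by exact_mod_cast hn₀
  have hz : 0 < ((n₀ : ℂ) + α - x + 1).re := by
    rw [add_sub_assoc]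
    simp only [add_re, intCast_re, one_re]
    linarith
  have hγ : 0 < ((m : ℂ) + α).re := by simp only [add_re, natCast_re]; positivity
  have hsum := (hasSum_Gamma_div_Gamma_add hz hγ).mul_left (Gamma ((m : ℂ) + α - x + 1))
  convert hsum.tsum_eq.symm using 1
  · ring_nf
  · congr 1 with k
    push_cast
    ring_nf
end

section
/- For complex numbers α, x with Re(α) > 0 and Re(α − x) > 0, and a nonnegative integer m, the following summation holds: Σ_{n ≥ 0} (1/(n+α−x)) · ((α)_n / n!) · Γ(m+α−x+1)Γ(n+α−x+1)/Γ(m+n+2α−x+1) = (Γ(α−x)/Γ(α)) · (1/(m+α)) · (m!/(α)_m), where (α)_n := α(α+1)···(α+n−1) is the Pochhammer symbol with (α)_0 = 1. -/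
open Complex Finset

/-- Pochhammer symbol (α)_n = α(α+1)⋯(α+n−1). -/
noncomputable def cpoch (α : ℂ) (n : ℕ) : ℂ := ∏ i ∈ Finset.range n, (α + i)

/-!
Since `Γ(n+α−x+1)/(n+α−x) = Γ(n+α−x)`, the `n`-th term is `Γ(m+α−x+1)/Γ(m+α+1)` times
`(α)_n/n! · B(n+α−x, m+α+1)`. Writing the Beta function as an integral over `(0,1)` and summing
under the integral sign with the binomial series `∑ (α)_n/n! tⁿ = (1−t)^(−α)` turns the series
into `B(α−x, m+1)`: this is Gauss's summation `₂F₁(α−x, α; m+2α−x+1; 1)` in integral form.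
Dominated convergence applies because `|(α)_n| ≤ Γ(Re α)/|Γ(α)| · (Re α)_n`: the real binomial
series at `Re α` then bounds the integrands by a multiple of the integrable
`t^(Re(α−x)−1) (1−t)^m`.
-/

open Polynomial MeasureTheory

theorem cpoch_eq_ascPochhammer_eval (α : ℂ) (n : ℕ) :
    cpoch α n = (ascPochhammer ℂ n).eval α := by
  induction n with
  | zero => simp [cpoch]
  | succ n ih => rw [cpoch, prod_range_succ, ← cpoch, ih, ascPochhammer_succ_eval]

theorem Ring.choose_add_sub_one_eq {𝕜 : Type*} [Field 𝕜] [CharZero 𝕜] (r : 𝕜) (n : ℕ) :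
    Ring.choose (r + n - 1) n = (ascPochhammer 𝕜 n).eval r / n.factorial := by
  rw [Ring.choose_eq_smul, descPochhammer_smeval_eq_ascPochhammer, ascPochhammer_smeval_eq_eval,
    smul_eq_mul, inv_mul_eq_div]
  ring_nf

theorem Complex.hasSum_ascPochhammer_mul_pow (a : ℂ) {z : ℂ} (hz : ‖z‖ < 1) :
    HasSum (fun n ↦ (ascPochhammer ℂ n).eval a / n.factorial * z ^ n) ((1 - z) ^ (-a)) := by
  have := (one_div_one_sub_cpow_hasFPowerSeriesOnBall_zero a).hasSum
    (y := z) (by simpa [enorm_eq_nnnorm, ← NNReal.coe_lt_one] using hz)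
  simpa [FormalMultilinearSeries.ofScalars_apply_eq, Ring.choose_add_sub_one_eq, cpow_neg,
    mul_comm] using this

theorem Real.hasSum_ascPochhammer_mul_pow (a : ℝ) {t : ℝ} (ht : |t| < 1) :
    HasSum (fun n ↦ (ascPochhammer ℝ n).eval a / n.factorial * t ^ n) ((1 - t) ^ (-a)) := by
  have := (one_div_one_sub_rpow_hasFPowerSeriesOnBall_zero a).hasSum
    (y := t) (by simpa [enorm_eq_nnnorm, ← NNReal.coe_lt_one] using ht)
  have h1 : 0 ≤ 1 - t := by linarith [le_abs_self t]
  simpa [FormalMultilinearSeries.ofScalars_apply_eq, Ring.choose_add_sub_one_eq, rpow_neg h1,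
    mul_comm] using this

theorem Complex.norm_Gamma_le_Gamma_re {s : ℂ} (hs : 0 < s.re) : ‖Gamma s‖ ≤ Real.Gamma s.re := by
  rw [Gamma_eq_integral hs, Real.Gamma_eq_integral hs, GammaIntegral]
  refine (norm_integral_le_integral_norm _).trans_eq (setIntegral_congr_fun measurableSet_Ioi ?_)
  intro t ht
  dsimp only
  rw [norm_mul, norm_real, Real.norm_of_nonneg (Real.exp_pos _).le,
    norm_cpow_eq_rpow_re_of_pos ht, sub_re, one_re]

theorem Real.Gamma_add_nat_eq_mul_ascPochhammer {a : ℝ} (ha : 0 < a) (n : ℕ) :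
    Real.Gamma (a + n) = Real.Gamma a * (ascPochhammer ℝ n).eval a := by
  induction n with
  | zero => simp
  | succ n ih =>
    rw [Nat.cast_succ, ← add_assoc, Real.Gamma_add_one (by positivity), ih,
      ascPochhammer_succ_eval]
    ring

theorem ascPochhammer_eval_eq_Gamma_div {α : ℂ} (hα : 0 < α.re) (n : ℕ) :
    (ascPochhammer ℂ n).eval α = Gamma (α + n) / Gamma α := by
  refine (Gamma_add_nat_div_Gamma_eq α fun k h ↦ ?_).symm
  have := congrArg re h
  simp only [neg_re, natCast_re] at this
  linarith [k.cast_nonneg (α := ℝ)]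

theorem norm_ascPochhammer_eval_le {α : ℂ} (hα : 0 < α.re) (n : ℕ) :
    ‖(ascPochhammer ℂ n).eval α‖ ≤
      Real.Gamma α.re / ‖Gamma α‖ * (ascPochhammer ℝ n).eval α.re := by
  rw [ascPochhammer_eval_eq_Gamma_div hα, norm_div, div_mul_eq_mul_div,
    ← Real.Gamma_add_nat_eq_mul_ascPochhammer hα]
  gcongr
  simpa using norm_Gamma_le_Gamma_re (s := α + n) (by simp; positivity)

noncomputable def betaIntegrand (u v : ℂ) (t : ℝ) : ℂ :=
  (t : ℂ) ^ (u - 1) * (1 - (t : ℂ)) ^ (v - 1)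

theorem betaIntegral_eq_integral_Ioo (u v : ℂ) :
    betaIntegral u v = ∫ t in Set.Ioo 0 1, betaIntegrand u v t := by
  rw [betaIntegral, intervalIntegral.integral_of_le zero_le_one, integral_Ioc_eq_integral_Ioo]
  rfl

theorem integrableOn_betaIntegrand {u v : ℂ} (hu : 0 < u.re) (hv : 0 < v.re) :
    IntegrableOn (betaIntegrand u v) (Set.Ioo 0 1) :=
  (betaIntegral_convergent hu hv).1.mono_set Set.Ioo_subset_Ioc_self

theorem one_sub_ofReal (t : ℝ) : 1 - (t : ℂ) = ((1 - t : ℝ) : ℂ) := by push_cast; rfl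

theorem norm_betaIntegrand (u v : ℂ) {t : ℝ} (ht : t ∈ Set.Ioo 0 1) :
    ‖betaIntegrand u v t‖ = t ^ (u.re - 1) * (1 - t) ^ (v.re - 1) := by
  rw [betaIntegrand, one_sub_ofReal, norm_mul, norm_cpow_eq_rpow_re_of_pos ht.1,
    norm_cpow_eq_rpow_re_of_pos (sub_pos.2 ht.2)]
  simp

theorem pow_mul_betaIntegrand (u v : ℂ) {t : ℝ} (ht : 0 < t) (n : ℕ) :
    (t : ℂ) ^ n * betaIntegrand u v t = betaIntegrand (u + n) v t := by
  rw [betaIntegrand, betaIntegrand, add_sub_right_comm, cpow_add _ _ (ofReal_ne_zero.2 ht.ne'),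
    cpow_natCast]
  ring

theorem one_sub_cpow_neg_mul_betaIntegrand (α u v : ℂ) {t : ℝ} (ht : t < 1) :
    (1 - (t : ℂ)) ^ (-α) * betaIntegrand u v t = betaIntegrand u (v - α) t := by
  have h : 1 - (t : ℂ) ≠ 0 := by rw [one_sub_ofReal]; exact ofReal_ne_zero.2 (by linarith)
  rw [betaIntegrand, betaIntegrand, show v - α - 1 = -α + (v - 1) by ring, cpow_add _ _ h]
  ring

theorem norm_one_sub_cpow_neg (α : ℂ) {t : ℝ} (ht : t < 1) :
    ‖(1 - (t : ℂ)) ^ (-α)‖ = (1 - t) ^ (-α.re) := by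
  rw [one_sub_ofReal, norm_cpow_eq_rpow_re_of_pos (sub_pos.2 ht), neg_re]

theorem hasSum_ascPochhammer_mul_betaIntegrand (α u v : ℂ) {t : ℝ} (ht : t ∈ Set.Ioo 0 1) :
    HasSum (fun n ↦ (ascPochhammer ℂ n).eval α / n.factorial * betaIntegrand (u + n) v t)
      (betaIntegrand u (v - α) t) := by
  have hz : ‖(t : ℂ)‖ < 1 := by rw [norm_real, Real.norm_of_nonneg ht.1.le]; exact ht.2
  rw [← one_sub_cpow_neg_mul_betaIntegrand α u v ht.2]
  have := (hasSum_ascPochhammer_mul_pow α hz).mul_right (betaIntegrand u v t)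
  simpa only [mul_assoc, pow_mul_betaIntegrand u v ht.1] using this

theorem hasSum_ascPochhammer_mul_betaIntegral {α u v : ℂ} (hα : 0 < α.re) (hu : 0 < u.re)
    (hvα : 0 < (v - α).re) :
    HasSum (fun n ↦ (ascPochhammer ℂ n).eval α / n.factorial * betaIntegral (u + n) v)
      (betaIntegral u (v - α)) := by
  have hv : 0 < v.re := by rw [sub_re] at hvα; linarith
  set K := Real.Gamma α.re / ‖Gamma α‖
  set bound : ℕ → ℝ → ℝ := fun n t ↦
    K * ((ascPochhammer ℝ n).eval α.re / n.factorial * t ^ n) * ‖betaIntegrand u v t‖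
  have hbound : ∀ t ∈ Set.Ioo (0 : ℝ) 1,
      HasSum (bound · t) (K * ‖betaIntegrand u (v - α) t‖) := by
    intro t ht
    rw [← one_sub_cpow_neg_mul_betaIntegrand α u v ht.2, norm_mul, norm_one_sub_cpow_neg α ht.2,
      ← mul_assoc]
    exact ((Real.hasSum_ascPochhammer_mul_pow α.re
      (abs_lt.2 ⟨by linarith [ht.1], ht.2⟩)).mul_left K).mul_right _
  simp_rw [betaIntegral_eq_integral_Ioo, ← integral_const_mul]
  refine hasSum_integral_of_dominated_convergence bound (fun n ↦ ?_) (fun n ↦ ?_) ?_ ?_ ?_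
  · exact (integrableOn_betaIntegrand (by simp; positivity) hv).aestronglyMeasurable.const_mul _
  · filter_upwards [ae_restrict_mem measurableSet_Ioo] with t ht
    rw [← pow_mul_betaIntegrand u v ht.1, norm_mul, norm_mul, norm_div, norm_pow, norm_real,
      Real.norm_of_nonneg ht.1.le, Complex.norm_natCast]
    calc _ = ‖(ascPochhammer ℂ n).eval α‖ / n.factorial * t ^ n * ‖betaIntegrand u v t‖ := by
          ring
      _ ≤ K * (ascPochhammer ℝ n).eval α.re / n.factorial * t ^ n * ‖betaIntegrand u v t‖ := by
          gcongr; exacts [pow_nonneg ht.1.le n, norm_ascPochhammer_eval_le hα n]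
      _ = bound n t := by ring
  · filter_upwards [ae_restrict_mem measurableSet_Ioo] with t ht
    exact (hbound t ht).summable
  · refine ((integrableOn_betaIntegrand hu hvα).norm.const_mul K).congr ?_
    filter_upwards [ae_restrict_mem measurableSet_Ioo] with t ht
    exact (hbound t ht).tsum_eq.symm
  · filter_upwards [ae_restrict_mem measurableSet_Ioo] with t ht
    simpa only [mul_comm] using hasSum_ascPochhammer_mul_betaIntegrand α u v ht

theorem betaIntegral_eq_Gamma_mul_Gamma_div {u v : ℂ} (hu : 0 < u.re) (hv : 0 < v.re) :
    betaIntegral u v = Gamma u * Gamma v / Gamma (u + v) := by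
  rw [Gamma_mul_Gamma_eq_betaIntegral hu hv,
    mul_div_cancel_left₀ _ (Gamma_ne_zero_of_re_pos (by rw [add_re]; positivity))]

theorem hasSum_ascPochhammer_mul_Gamma_div_Gamma {α u v : ℂ} (hα : 0 < α.re) (hu : 0 < u.re)
    (hvα : 0 < (v - α).re) :
    HasSum
      (fun n ↦ (ascPochhammer ℂ n).eval α / n.factorial * (Gamma (u + n) / Gamma (u + v + n)))
      (Gamma u * Gamma (v - α) / (Gamma v * Gamma (u + v - α))) := by
  have hv : 0 < v.re := by rw [sub_re] at hvα; linarith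
  have hΓv := Gamma_ne_zero_of_re_pos hv
  have hterm (n : ℕ) : Gamma (u + n) / Gamma (u + v + n) = betaIntegral (u + n) v / Gamma v := by
    rw [betaIntegral_eq_Gamma_mul_Gamma_div (by simp; positivity) hv, add_right_comm]
    field_simp
  have h := (hasSum_ascPochhammer_mul_betaIntegral hα hu hvα).div_const (Gamma v)
  rw [betaIntegral_eq_Gamma_mul_Gamma_div hu hvα, ← add_sub_assoc] at h
  simp_rw [hterm, ← mul_div_assoc, mul_comm (Gamma v), ← div_div]
  exact h

theorem stmt_7 (α x : ℂ) (hα : 0 < α.re) (hαx : 0 < (α - x).re) (m : ℕ) :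
    (∑' n : ℕ, (1 / ((n : ℂ) + α - x)) * (cpoch α n / (n.factorial : ℂ)) *
        (Complex.Gamma ((m : ℂ) + α - x + 1) * Complex.Gamma ((n : ℂ) + α - x + 1) /
          Complex.Gamma ((m : ℂ) + (n : ℂ) + 2 * α - x + 1))) =
      (Complex.Gamma (α - x) / Complex.Gamma α) * (1 / ((m : ℂ) + α)) *
        ((m.factorial : ℂ) / cpoch α m) := by
  have hm : (m : ℂ) + α + 1 - α = m + 1 := by ring
  have hsum := (hasSum_ascPochhammer_mul_Gamma_div_Gamma hα hαx
    (by rw [hm]; simp; positivity)).mul_left (Gamma (m + α - x + 1))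
  have hαxn (n : ℕ) : α - x + n ≠ 0 := ne_of_apply_ne re (by simp only [add_re]; simp; positivity)
  calc _ = ∑' n : ℕ, Gamma (m + α - x + 1) * ((ascPochhammer ℂ n).eval α / n.factorial *
        (Gamma (α - x + n) / Gamma (α - x + (m + α + 1) + n))) := tsum_congr fun n ↦ ?_
    _ = _ := hsum.tsum_eq
    _ = _ := by
      have := Gamma_ne_zero_of_re_pos hα
      have := Gamma_ne_zero_of_re_pos (s := m + α - x + 1) (by
        rw [show (m : ℂ) + α - x + 1 = α - x + (m + 1) by ring, add_re]; simp; positivity)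
      rw [hm, Gamma_nat_eq_factorial, show α - x + (m + α + 1) - α = m + α - x + 1 by ring,
        cpoch_eq_ascPochhammer_eval, ascPochhammer_eval_eq_Gamma_div hα,
        Gamma_add_one (m + α) (ne_of_apply_ne re (by simp; positivity)), add_comm α]
      field_simp
  rw [cpoch_eq_ascPochhammer_eval, show (n : ℂ) + α - x = α - x + n by ring,
    Gamma_add_one _ (hαxn n), show (m : ℂ) + n + 2 * α - x + 1 = α - x + (m + α + 1) + n by ring]
  field_simp [hαxn n]
end

section
/- For a real number α > 0, ζ̃(3;α) = ζ̃(1,2;α), i.e., Σ_{m ≥ 0} (Γ(m+α+1)/Γ(m+2α)) / (m+α)³ = Σ_{0 ≤ n₁ < n₂} (Γ(n₂+α+1)/Γ(n₂+2α)) / ((n₁+α)(n₂+α)²). -/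
noncomputable def G (α : ℝ) (m n : ℕ) : ℝ :=
  Real.Gamma ((m : ℝ) + α) * Real.Gamma ((n : ℝ) + α) / Real.Gamma ((m : ℝ) + (n : ℝ) + 2 * α)

variable {α : ℝ}

lemma G_pos (hα : 0 < α) (m n : ℕ) : 0 < G α m n := by
  unfold G
  have h1 : (0:ℝ) < (m : ℝ) + α := by positivity
  have h2 : (0:ℝ) < (n : ℝ) + α := by positivity
  have h3 : (0:ℝ) < (m : ℝ) + (n : ℝ) + 2 * α := by positivity
  exact div_pos (mul_pos (Real.Gamma_pos_of_pos h1) (Real.Gamma_pos_of_pos h2))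
    (Real.Gamma_pos_of_pos h3)

lemma G_symm (m n : ℕ) : G α m n = G α n m := by
  unfold G
  rw [mul_comm (Real.Gamma _)]
  ring_nf

lemma G_step (hα : 0 < α) (m n : ℕ) :
    G α m (n + 1) = G α m n * (((n : ℝ) + α) / ((m : ℝ) + (n : ℝ) + 2 * α)) := by
  have h2 : (0:ℝ) < (n : ℝ) + α := by positivity
  have h3 : (0:ℝ) < (m : ℝ) + (n : ℝ) + 2 * α := by positivity
  unfold G
  push_cast
  rw [show (m:ℝ) + (n+1) + 2*α = ((m:ℝ) + n + 2*α) + 1 by ring,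
    show (n:ℝ) + 1 + α = ((n:ℝ) + α) + 1 by ring,
    Real.Gamma_add_one h2.ne', Real.Gamma_add_one h3.ne']
  field_simp

lemma G_pascal (hα : 0 < α) (m n : ℕ) :
    G α m n = G α (m + 1) n + G α m (n + 1) := by
  have h1 : (0:ℝ) < (m : ℝ) + α := by positivity
  have h2 : (0:ℝ) < (n : ℝ) + α := by positivity
  have h3 : (0:ℝ) < (m : ℝ) + (n : ℝ) + 2 * α := by positivity
  have h3' := (Real.Gamma_pos_of_pos h3).ne'
  unfold G
  push_cast
  rw [show (m:ℝ) + 1 + α = ((m:ℝ) + α) + 1 by ring,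
    show (m:ℝ) + 1 + (n:ℝ) + 2*α = ((m:ℝ) + n + 2*α) + 1 by ring,
    show (m:ℝ) + ((n:ℝ)+1) + 2*α = ((m:ℝ) + n + 2*α) + 1 by ring,
    show (n:ℝ) + 1 + α = ((n:ℝ) + α) + 1 by ring,
    Real.Gamma_add_one h1.ne', Real.Gamma_add_one h2.ne', Real.Gamma_add_one h3.ne']
  field_simp
  ring

lemma G_ratio (hα : 0 < α) (m n : ℕ) :
    ((n : ℝ) + α) * G α (m + 1) n = ((m : ℝ) + α) * G α m (n + 1) := by
  have h1 : (0:ℝ) < (m : ℝ) + α := by positivity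
  have h2 : (0:ℝ) < (n : ℝ) + α := by positivity
  have h3 : (0:ℝ) < (m : ℝ) + (n : ℝ) + 2 * α := by positivity
  unfold G
  push_cast
  rw [show (m:ℝ) + 1 + α = ((m:ℝ) + α) + 1 by ring,
    show (m:ℝ) + 1 + (n:ℝ) + 2*α = ((m:ℝ) + n + 2*α) + 1 by ring,
    show (m:ℝ) + ((n:ℝ)+1) + 2*α = ((m:ℝ) + n + 2*α) + 1 by ring,
    show (n:ℝ) + 1 + α = ((n:ℝ) + α) + 1 by ring,
    Real.Gamma_add_one h1.ne', Real.Gamma_add_one h2.ne', Real.Gamma_add_one h3.ne']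
  field_simp

open Filter

lemma ratio_pow_le (α : ℝ) (hα : 0 < α) (n : ℕ) (k : ℕ) (hk : 1 ≤ k) :
    (((n:ℝ)+α)/((n:ℝ)+2*α))^k ≤ ((n:ℝ)+α)/((n:ℝ)+(k:ℝ)*α+α) := by
  induction k, hk using Nat.le_induction with
  | base => norm_num; ring_nf; norm_num
  | succ k hk ih =>
      push_cast
      have h2 : (0:ℝ) < (n : ℝ) + α := by positivity
      have h3 : (0:ℝ) < (n : ℝ) + 2*α := by positivity
      have h4 : (0:ℝ) < (n:ℝ)+(k:ℝ)*α+α := by positivity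
      have h5 : (0:ℝ) < (n:ℝ)+((k:ℝ)+1)*α+α := by positivity
      calc (((n:ℝ)+α)/((n:ℝ)+2*α))^(k+1)
          = (((n:ℝ)+α)/((n:ℝ)+2*α))^k * (((n:ℝ)+α)/((n:ℝ)+2*α)) := by ring
        _ ≤ (((n:ℝ)+α)/((n:ℝ)+(k:ℝ)*α+α)) * (((n:ℝ)+α)/((n:ℝ)+2*α)) := by
            apply mul_le_mul_of_nonneg_right ih (by positivity)
        _ ≤ ((n:ℝ)+α)/((n:ℝ)+((k:ℝ)+1)*α+α) := by
            rw [div_mul_div_comm, div_le_div_iff₀ (by positivity) h5]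
            nlinarith [sq_nonneg α, mul_nonneg (Nat.cast_nonneg (α := ℝ) k) (sq_nonneg α)]

lemma G_anti (hα : 0 < α) (m : ℕ) : Antitone (fun n => G α m n) := by
  apply antitone_nat_of_succ_le
  intro n
  rw [G_step hα]
  have h2 : (0:ℝ) < (n : ℝ) + α := by positivity
  have h3 : (0:ℝ) < (m : ℝ) + (n : ℝ) + 2 * α := by positivity
  calc G α m n * (((n : ℝ) + α) / ((m : ℝ) + (n : ℝ) + 2 * α))
      ≤ G α m n * 1 := by
        apply mul_le_mul_of_nonneg_left _ (G_pos hα m n).le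
        rw [div_le_one h3]
        have : (0:ℝ) ≤ (m:ℝ) := Nat.cast_nonneg m
        linarith
    _ = G α m n := mul_one _

lemma G_pow_bound (hα : 0 < α) (m : ℕ) (k : ℕ) (hk : 1 ≤ k) (hkα : 1 ≤ (k:ℝ) * α)
    (n : ℕ) : (G α m n)^k ≤ (G α m 0)^k * (α / ((n:ℝ) + α)) := by
  induction n with
  | zero => simp [div_self hα.ne']
  | succ n ih =>
      push_cast
      have h2 : (0:ℝ) < (n : ℝ) + α := by positivity
      have h2' : (0:ℝ) < (n : ℝ) + 1 + α := by positivity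
      have h3 : (0:ℝ) < (m : ℝ) + (n : ℝ) + 2 * α := by positivity
      have hGpos := G_pos hα m n
      have hstep : G α m (n+1) ≤ G α m n * (((n:ℝ)+α)/((n:ℝ)+2*α)) := by
        rw [G_step hα]
        apply mul_le_mul_of_nonneg_left _ hGpos.le
        apply div_le_div_of_nonneg_left h2.le (by positivity)
        have : (0:ℝ) ≤ (m:ℝ) := Nat.cast_nonneg m
        linarith
      have hpos1 : (0:ℝ) ≤ G α m (n+1) := (G_pos hα m (n+1)).le
      calc (G α m (n+1))^k
          ≤ (G α m n * (((n:ℝ)+α)/((n:ℝ)+2*α)))^k :=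
            pow_le_pow_left₀ hpos1 hstep k
        _ = (G α m n)^k * (((n:ℝ)+α)/((n:ℝ)+2*α))^k := mul_pow _ _ _
        _ ≤ (G α m n)^k * (((n:ℝ)+α)/((n:ℝ)+(k:ℝ)*α+α)) := by
            apply mul_le_mul_of_nonneg_left (ratio_pow_le α hα n k hk) (by positivity)
        _ ≤ (G α m n)^k * (((n:ℝ)+α)/((n:ℝ)+1+α)) := by
            apply mul_le_mul_of_nonneg_left _ (by positivity)
            apply div_le_div_of_nonneg_left h2.le h2'
            linarith
        _ ≤ ((G α m 0)^k * (α / ((n:ℝ) + α))) * (((n:ℝ)+α)/((n:ℝ)+1+α)) := by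
            apply mul_le_mul_of_nonneg_right ih (by positivity)
        _ = (G α m 0)^k * (α / ((n:ℝ)+1+α)) := by
            field_simp

lemma G_tendsto_zero (hα : 0 < α) (m : ℕ) :
    Tendsto (fun n => G α m n) atTop (nhds 0) := by
  set k := ⌈α⁻¹⌉₊ with hkdef
  have hk : 1 ≤ k := Nat.one_le_iff_ne_zero.mpr (by
    simp [hkdef, Nat.ceil_eq_zero, not_le, inv_pos, hα])
  have hkα : 1 ≤ (k:ℝ) * α := by
    rw [← div_le_iff₀ hα, one_div]
    exact Nat.le_ceil α⁻¹
  -- limit exists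
  have hbdd : BddBelow (Set.range (fun n => G α m n)) :=
    ⟨0, fun x ⟨n, hn⟩ => hn ▸ (G_pos hα m n).le⟩
  have hL : Tendsto (fun n => G α m n) atTop (nhds (⨅ n, G α m n)) :=
    tendsto_atTop_ciInf (G_anti hα m) hbdd
  have hLk : Tendsto (fun n => (G α m n)^k) atTop (nhds ((⨅ n, G α m n)^k)) := hL.pow k
  -- squeeze: (G α m n)^k → 0
  have hub : Tendsto (fun n : ℕ => (G α m 0)^k * (α / ((n:ℝ) + α))) atTop (nhds 0) := by
    rw [show (0:ℝ) = (G α m 0)^k * 0 by ring]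
    apply Tendsto.const_mul
    apply Tendsto.div_atTop tendsto_const_nhds
    exact tendsto_atTop_add_const_right _ α tendsto_natCast_atTop_atTop
  have h0 : Tendsto (fun n => (G α m n)^k) atTop (nhds 0) := by
    apply squeeze_zero (fun n => pow_nonneg (G_pos hα m n).le k) (G_pow_bound hα m k hk hkα) hub
  have : (⨅ n, G α m n)^k = 0 := tendsto_nhds_unique hLk h0
  have hinf : (⨅ n, G α m n) = 0 := by
    exact pow_eq_zero_iff (Nat.one_le_iff_ne_zero.mp hk) |>.mp this
  rwa [hinf] at hL

lemma hasSum_telescope {f : ℕ → ℝ} (hnn : ∀ j, 0 ≤ f j - f (j+1))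
    (h0 : Tendsto f atTop (nhds 0)) : HasSum (fun j => f j - f (j+1)) (f 0) := by
  rw [hasSum_iff_tendsto_nat_of_nonneg hnn]
  have heq : ∀ N, ∑ j ∈ Finset.range N, (f j - f (j+1)) = f 0 - f N := by
    intro N; exact Finset.sum_range_sub' f N
  simp only [heq]
  simpa using tendsto_const_nhds.sub h0

lemma hasSum_A (hα : 0 < α) (m n : ℕ) :
    HasSum (fun j => G α (m+1) (n+j)) (G α m n) := by
  have h : (fun j => G α (m+1) (n+j)) = fun j => G α m (n+j) - G α m (n+j+1) := by
    funext j
    have := G_pascal hα (m) (n+j)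
    linarith
  rw [h]
  have := hasSum_telescope (f := fun j => G α m (n+j))
    (fun j => by
      have := G_pascal hα m (n+j)
      have := G_pos hα (m+1) (n+j)
      simp only [← Nat.add_assoc]
      linarith)
    (by
      have hcomp : Tendsto (fun j : ℕ => n + j) atTop atTop :=
        tendsto_atTop_atTop_of_monotone (fun a b hab => Nat.add_le_add_left hab n)
          (fun b => ⟨b, Nat.le_add_left b n⟩)
      exact (G_tendsto_zero hα m).comp hcomp)
  simpa [Nat.add_assoc] using this

lemma hasSum_A' (hα : 0 < α) (m n : ℕ) :
    HasSum (fun i => G α (m+i) (n+1)) (G α m n) := by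
  have h := hasSum_A hα n m
  rw [show (fun i => G α (m+i) (n+1)) = (fun j => G α (n+1) (m+j)) from
    funext fun j => G_symm (m+j) (n+1), G_symm m n]
  exact h

lemma hasSum_B (hα : 0 < α) (m n : ℕ) :
    HasSum (fun j => G α m (n+1+j) / ((n:ℝ)+(j:ℝ)+α)) (G α m n / ((m:ℝ)+α)) := by
  have htel : HasSum (fun j => (G α m (n+j) - G α m (n+(j+1))) / ((m:ℝ)+α))
      (G α m (n+0) / ((m:ℝ)+α)) := by
    refine HasSum.div_const ?_ _
    exact hasSum_telescope
      (fun j => by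
        have := G_pascal hα m (n+j)
        have := G_pos hα (m+1) (n+j)
        simp only [← Nat.add_assoc]
        linarith)
      (by
        have hcomp : Tendsto (fun j : ℕ => n + j) atTop atTop :=
          tendsto_atTop_atTop_of_monotone (fun a b hab => Nat.add_le_add_left hab n)
            (fun b => ⟨b, Nat.le_add_left b n⟩)
        exact (G_tendsto_zero hα m).comp hcomp)
  rw [show (fun j => G α m (n+1+j) / ((n:ℝ)+(j:ℝ)+α))
      = fun j => (G α m (n+j) - G α m (n+(j+1))) / ((m:ℝ)+α) from funext fun j => ?_]
  · simpa using htel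
  · have hp := G_pascal hα m (n+j)
    have hr := G_ratio hα m (n+j)
    have hm : (0:ℝ) < (m:ℝ)+α := by positivity
    have hn' : (0:ℝ) < (n:ℝ)+(j:ℝ)+α := by positivity
    push_cast at hr
    rw [show n+1+j = (n+j)+1 by omega, show n+(j+1) = (n+j)+1 by omega]
    rw [div_eq_div_iff hn'.ne' hm.ne', hp]
    push_cast
    linear_combination -hr

lemma summable_inv_sq_shift : Summable (fun m : ℕ => 1 / ((m:ℝ)+1)^2) := by
  have h0 : Summable (fun n : ℕ => 1 / (n:ℝ)^2) := Real.summable_one_div_nat_pow.mpr one_lt_two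
  have h1 := (summable_nat_add_iff 1).mpr h0
  refine h1.congr fun n => ?_
  push_cast
  ring

lemma min_mul_le (hα : 0 < α) (m : ℕ) : min α 1 * ((m:ℝ)+1) ≤ (m:ℝ)+α := by
  have hm : (0:ℝ) ≤ (m:ℝ) := Nat.cast_nonneg m
  rcases le_total α 1 with h | h
  · rw [min_eq_left h]
    nlinarith
  · rw [min_eq_right h]
    linarith

lemma summable_G_diag (hα : 0 < α) : Summable (fun m : ℕ => G α m 0 / ((m:ℝ)+α)^2) := by
  have hmin : (0:ℝ) < min α 1 := lt_min hα one_pos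
  refine Summable.of_nonneg_of_le
    (f := fun m : ℕ => (G α 0 0 / (min α 1)^2) * (1 / ((m:ℝ)+1)^2))
    (fun m => div_nonneg (G_pos hα m 0).le (by positivity))
    (fun m => ?_) (summable_inv_sq_shift.mul_left _)
  show G α m 0 / ((m:ℝ)+α)^2 ≤ (G α 0 0 / (min α 1)^2) * (1 / ((m:ℝ)+1)^2)
  have hG : G α m 0 ≤ G α 0 0 := by
    rw [G_symm m 0]
    exact G_anti hα 0 (Nat.zero_le m)
  have hsq : (min α 1)^2 * ((m:ℝ)+1)^2 ≤ ((m:ℝ)+α)^2 := by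
    rw [← mul_pow]
    exact pow_le_pow_left₀ (by positivity) (min_mul_le hα m) 2
  have hre : (G α 0 0 / (min α 1)^2) * (1/((m:ℝ)+1)^2)
      = G α 0 0 / ((min α 1)^2 * ((m:ℝ)+1)^2) := by
    rw [div_mul_div_comm, mul_one]
  rw [hre, div_le_div_iff₀ (by positivity) (by positivity)]
  exact mul_le_mul hG hsq (by positivity) (G_pos hα 0 0).le

lemma summable_G_col (hα : 0 < α) (n : ℕ) : Summable (fun m : ℕ => G α m (n+1)) := by
  have := (hasSum_A' hα 0 n).summable
  simpa using this

lemma hasSum_step1 (hα : 0 < α) (m : ℕ) :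
    HasSum (fun j : ℕ => G α m (1+j) / (((m:ℝ)+α)*((j:ℝ)+α))) (G α m 0 / ((m:ℝ)+α)^2) := by
  have h := (hasSum_B hα m 0).div_const ((m:ℝ)+α)
  have hf : (fun j : ℕ => G α m (1+j) / (((m:ℝ)+α)*((j:ℝ)+α)))
      = (fun j : ℕ => G α m (0+1+j) / (((0:ℕ):ℝ)+(j:ℝ)+α) / ((m:ℝ)+α)) := by
    funext j
    rw [show (0:ℕ)+1+j = 1+j by omega, div_div]
    push_cast
    ring_nf
  rw [hf, show G α m 0/((m:ℝ)+α)^2 = G α m 0/((m:ℝ)+α)/((m:ℝ)+α) by rw [div_div, sq]]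
  exact h

lemma hasSum_step2 (hα : 0 < α) (j m : ℕ) :
    HasSum (fun b : ℕ => G α m (1+j+1+b) / ((1:ℝ)+(j:ℝ)+(b:ℝ)+α))
      (G α m (1+j) / ((m:ℝ)+α)) := by
  have h := hasSum_B hα m (1+j)
  have hf : (fun b : ℕ => G α m (1+j+1+b) / ((1:ℝ)+(j:ℝ)+(b:ℝ)+α))
      = (fun b : ℕ => G α m (1+j+1+b) / (((1+j:ℕ):ℝ)+(b:ℝ)+α)) := by
    funext b
    push_cast
    ring_nf
  rw [hf]
  exact h

lemma tsum_col (hα : 0 < α) (j b : ℕ) :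
    ∑' m : ℕ, G α m (1+j+1+b) / ((1:ℝ)+(j:ℝ)+(b:ℝ)+α)
      = G α 0 (j+1+b) / ((1:ℝ)+(j:ℝ)+(b:ℝ)+α) := by
  rw [tsum_div_const]
  congr 1
  have hA := hasSum_A' hα 0 (j+1+b)
  have : (fun i : ℕ => G α (0+i) (j+1+b+1)) = (fun i : ℕ => G α i (1+j+1+b)) := by
    funext i
    congr 1
    · omega
    · omega
  rw [this] at hA
  exact hA.tsum_eq

lemma key_inner (hα : 0 < α) (j : ℕ) :
    ∑' m : ℕ, G α m (1+j) / ((m:ℝ)+α)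
      = ∑' b : ℕ, G α 0 (j+1+b) / ((1:ℝ)+(j:ℝ)+(b:ℝ)+α) := by
  have h2 := hasSum_step2 hα j
  have hsum2 : Summable (Function.uncurry
      (fun m b : ℕ => G α m (1+j+1+b) / ((1:ℝ)+(j:ℝ)+(b:ℝ)+α))) := by
    refine (summable_prod_of_nonneg
      (fun p => div_nonneg (G_pos hα _ _).le (by positivity))).mpr
      ⟨fun m => (h2 m).summable, ?_⟩
    refine Summable.of_nonneg_of_le (f := fun m : ℕ => α⁻¹ * G α m (j+1))
      (fun m => tsum_nonneg fun b => div_nonneg (G_pos hα _ _).le (by positivity))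
      (fun m => ?_) (((summable_G_col hα j)).mul_left α⁻¹)
    rw [(h2 m).tsum_eq, show 1+j = j+1 by omega]
    rw [div_eq_mul_inv, mul_comm]
    apply mul_le_mul_of_nonneg_right _ (G_pos hα m (j+1)).le
    rw [inv_le_inv₀ (by positivity) hα]
    simp [Nat.cast_nonneg]
  calc ∑' m : ℕ, G α m (1+j) / ((m:ℝ)+α)
      = ∑' m : ℕ, ∑' b : ℕ, G α m (1+j+1+b) / ((1:ℝ)+(j:ℝ)+(b:ℝ)+α) :=
        tsum_congr fun m => ((h2 m).tsum_eq).symm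
    _ = ∑' b : ℕ, ∑' m : ℕ, G α m (1+j+1+b) / ((1:ℝ)+(j:ℝ)+(b:ℝ)+α) :=
        (Summable.tsum_comm hsum2).symm
    _ = ∑' b : ℕ, G α 0 (j+1+b) / ((1:ℝ)+(j:ℝ)+(b:ℝ)+α) :=
        tsum_congr fun b => tsum_col hα j b

lemma core (hα : 0 < α) :
    ∑' m : ℕ, G α m 0 / ((m:ℝ)+α)^2
      = ∑' a : ℕ, ∑' b : ℕ, G α 0 (a+1+b) / (((a:ℝ)+α) * ((1:ℝ)+(a:ℝ)+(b:ℝ)+α)) := by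
  have h1 := hasSum_step1 hα
  have hsum1 : Summable (Function.uncurry
      (fun m j : ℕ => G α m (1+j) / (((m:ℝ)+α)*((j:ℝ)+α)))) := by
    refine (summable_prod_of_nonneg
      (fun p => div_nonneg (G_pos hα _ _).le (by positivity))).mpr
      ⟨fun m => (h1 m).summable, ?_⟩
    exact (summable_G_diag hα).congr fun m => ((h1 m).tsum_eq).symm
  calc ∑' m : ℕ, G α m 0 / ((m:ℝ)+α)^2
      = ∑' m : ℕ, ∑' j : ℕ, G α m (1+j) / (((m:ℝ)+α)*((j:ℝ)+α)) :=
        tsum_congr fun m => ((h1 m).tsum_eq).symm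
    _ = ∑' j : ℕ, ∑' m : ℕ, G α m (1+j) / (((m:ℝ)+α)*((j:ℝ)+α)) :=
        (Summable.tsum_comm hsum1).symm
    _ = ∑' j : ℕ, (∑' m : ℕ, G α m (1+j) / ((m:ℝ)+α)) / ((j:ℝ)+α) := by
        refine tsum_congr fun j => ?_
        rw [← tsum_div_const]
        exact tsum_congr fun m => by rw [div_div]
    _ = ∑' j : ℕ, (∑' b : ℕ, G α 0 (j+1+b) / ((1:ℝ)+(j:ℝ)+(b:ℝ)+α)) / ((j:ℝ)+α) := by
        exact tsum_congr fun j => by rw [key_inner hα j]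
    _ = ∑' a : ℕ, ∑' b : ℕ, G α 0 (a+1+b) / (((a:ℝ)+α) * ((1:ℝ)+(a:ℝ)+(b:ℝ)+α)) := by
        refine tsum_congr fun a => ?_
        rw [← tsum_div_const]
        refine tsum_congr fun b => ?_
        rw [div_div, mul_comm]

lemma term_L (hα : 0 < α) (m : ℕ) :
    Real.Gamma ((m : ℝ) + α + 1) / Real.Gamma ((m : ℝ) + 2 * α) / ((m : ℝ) + α) ^ 3
      = (G α m 0 / ((m:ℝ)+α)^2) * (Real.Gamma α)⁻¹ := by
  have h1 : (0:ℝ) < (m:ℝ) + α := by positivity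
  have h2 : (0:ℝ) < (m:ℝ) + 2*α := by positivity
  have hg := (Real.Gamma_pos_of_pos hα).ne'
  have hg2 := (Real.Gamma_pos_of_pos h2).ne'
  unfold G
  rw [Real.Gamma_add_one h1.ne']
  push_cast
  rw [add_zero, zero_add]
  field_simp

lemma term_R (hα : 0 < α) (a b : ℕ) :
    Real.Gamma (((a + b + 1 : ℕ) : ℝ) + α + 1) / Real.Gamma (((a + b + 1 : ℕ) : ℝ) + 2 * α) /
        (((a : ℝ) + α) * (((a + b + 1 : ℕ) : ℝ) + α) ^ 2)
      = (G α 0 (a+1+b) / (((a:ℝ)+α) * ((1:ℝ)+(a:ℝ)+(b:ℝ)+α))) * (Real.Gamma α)⁻¹ := by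
  have h1 : (0:ℝ) < (a:ℝ) + (b:ℝ) + 1 + α := by positivity
  have h2 : (0:ℝ) < (a:ℝ) + (b:ℝ) + 1 + 2*α := by positivity
  have h3 : (0:ℝ) < (a:ℝ) + α := by positivity
  have hg := (Real.Gamma_pos_of_pos hα).ne'
  have hg1 := (Real.Gamma_pos_of_pos h1).ne'
  have hg2 := (Real.Gamma_pos_of_pos h2).ne'
  unfold G
  push_cast
  rw [show (a:ℝ) + (b:ℝ) + 1 + α + 1 = ((a:ℝ) + (b:ℝ) + 1 + α) + 1 by ring,
    Real.Gamma_add_one h1.ne']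
  rw [show (0:ℝ) + ((a:ℝ)+1+(b:ℝ)) + 2*α = (a:ℝ) + (b:ℝ) + 1 + 2*α by ring,
    show (a:ℝ)+1+(b:ℝ)+α = (a:ℝ) + (b:ℝ) + 1 + α by ring, zero_add]
  field_simp
  ring

/-- The duality ζ̃(3;α) = ζ̃(1,2;α) for the modified parametrized series with factor
Γ(m_r+α+1)/Γ(m_r+2α); pairs 0 ≤ n₁ < n₂ are parametrized as n₁ = a, n₂ = a+b+1. -/
theorem stmt_11 (α : ℝ) (hα : 0 < α) :
    (∑' m : ℕ, Real.Gamma ((m : ℝ) + α + 1) / Real.Gamma ((m : ℝ) + 2 * α) /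
        ((m : ℝ) + α) ^ 3) =
      ∑' a : ℕ, ∑' b : ℕ,
        Real.Gamma (((a + b + 1 : ℕ) : ℝ) + α + 1) / Real.Gamma (((a + b + 1 : ℕ) : ℝ) + 2 * α) /
          (((a : ℝ) + α) * (((a + b + 1 : ℕ) : ℝ) + α) ^ 2) := by
  calc (∑' m : ℕ, Real.Gamma ((m : ℝ) + α + 1) / Real.Gamma ((m : ℝ) + 2 * α) /
        ((m : ℝ) + α) ^ 3)
      = ∑' m : ℕ, (G α m 0 / ((m:ℝ)+α)^2) * (Real.Gamma α)⁻¹ :=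
        tsum_congr fun m => term_L hα m
    _ = (∑' m : ℕ, G α m 0 / ((m:ℝ)+α)^2) * (Real.Gamma α)⁻¹ := tsum_mul_right
    _ = (∑' a : ℕ, ∑' b : ℕ, G α 0 (a+1+b) / (((a:ℝ)+α) * ((1:ℝ)+(a:ℝ)+(b:ℝ)+α)))
          * (Real.Gamma α)⁻¹ := by rw [core hα]
    _ = ∑' a : ℕ, (∑' b : ℕ, G α 0 (a+1+b) / (((a:ℝ)+α) * ((1:ℝ)+(a:ℝ)+(b:ℝ)+α)))
          * (Real.Gamma α)⁻¹ := tsum_mul_right.symm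
    _ = ∑' a : ℕ, ∑' b : ℕ, (G α 0 (a+1+b) / (((a:ℝ)+α) * ((1:ℝ)+(a:ℝ)+(b:ℝ)+α)))
          * (Real.Gamma α)⁻¹ := tsum_congr fun a => tsum_mul_right.symm
    _ = ∑' a : ℕ, ∑' b : ℕ,
        Real.Gamma (((a + b + 1 : ℕ) : ℝ) + α + 1) / Real.Gamma (((a + b + 1 : ℕ) : ℝ) + 2 * α) /
          (((a : ℝ) + α) * (((a + b + 1 : ℕ) : ℝ) + α) ^ 2) :=
        tsum_congr fun a => tsum_congr fun b => (term_R hα a b).symm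
end

section
/- For a real number α > 0 and integers m ≥ 0, n ≥ 0 with n ≥ 1, the partial sums telescope: Σ_{n₀ < n ≤ N} (1/(n+α)) · Γ(m+α+1)Γ(n+α+1)/Γ(m+n+2α+1) = (1/(m+α)) · [Γ(m+α+1)Γ(n₀+α+1)/Γ(m+n₀+2α+1) − Γ(m+α+1)Γ(N+α+1)/Γ(m+N+2α+1)] for any integers −1 ≤ n₀ < N. -/
/-!
With `T x = Γ(x + α + 1) / Γ(m + x + 2α + 1)`, the functional equation `Γ(s + 1) = s Γ(s)` gives
`T x - T (x + 1) = (m + α) · Γ(x + α + 1) / Γ(m + x + 2α + 2)`, which is `m + α` times the summand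
at `n = x + 1`; the sum therefore telescopes.
-/

open Finset

theorem Real.Gamma_div_Gamma_sub_Gamma_div_Gamma_add_one {a b : ℝ} (ha : a ≠ 0) (hb : b ≠ 0) :
    Real.Gamma a / Real.Gamma b - Real.Gamma (a + 1) / Real.Gamma (b + 1) =
      (b - a) * (Real.Gamma a / Real.Gamma (b + 1)) := by
  rw [Real.Gamma_add_one ha, Real.Gamma_add_one hb]
  by_cases hΓ : Real.Gamma b = 0
  · simp [hΓ]
  · field_simp

theorem Real.sum_range_Gamma_div_Gamma_telescope {a d : ℝ} (ha : 0 < a) (hd : 0 < d) (n : ℕ) :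
    ∑ k ∈ range n, 1 / (a + k) * (Real.Gamma (a + k + 1) / Real.Gamma (a + d + k + 1)) =
      1 / d * (Real.Gamma a / Real.Gamma (a + d) - Real.Gamma (a + n) / Real.Gamma (a + d + n)) := by
  set T : ℕ → ℝ := fun k ↦ Real.Gamma (a + k) / Real.Gamma (a + d + k)
  have hterm (k : ℕ) : 1 / (a + k) * (Real.Gamma (a + k + 1) / Real.Gamma (a + d + k + 1)) =
      1 / d * (T k - T (k + 1)) := by
    have hak : a + k ≠ 0 := by positivity
    simp only [T, Nat.cast_succ, ← add_assoc]
    rw [Real.Gamma_div_Gamma_sub_Gamma_div_Gamma_add_one hak (by positivity), Real.Gamma_add_one hak]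
    field_simp
    ring
  simp only [hterm, ← mul_sum, sum_range_sub', T, Nat.cast_zero, add_zero]

theorem stmt_13 (α : ℝ) (hα : 0 < α) (m : ℕ) (n₀ N : ℤ) (hn₀ : -1 ≤ n₀) (hN : n₀ < N) :
    (∑ k ∈ Finset.range (N - n₀).toNat,
        (1 / (((n₀ + 1 + k : ℤ) : ℝ) + α)) *
          (Real.Gamma ((m : ℝ) + α + 1) * Real.Gamma (((n₀ + 1 + k : ℤ) : ℝ) + α + 1) /
            Real.Gamma ((m : ℝ) + ((n₀ + 1 + k : ℤ) : ℝ) + 2 * α + 1))) =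
      (1 / ((m : ℝ) + α)) *
        (Real.Gamma ((m : ℝ) + α + 1) * Real.Gamma ((n₀ : ℝ) + α + 1) /
            Real.Gamma ((m : ℝ) + (n₀ : ℝ) + 2 * α + 1) -
          Real.Gamma ((m : ℝ) + α + 1) * Real.Gamma ((N : ℝ) + α + 1) /
            Real.Gamma ((m : ℝ) + (N : ℝ) + 2 * α + 1)) := by
  have ha : (0 : ℝ) < n₀ + α + 1 := by
    have : (-1 : ℝ) ≤ n₀ := by exact_mod_cast hn₀
    linarith
  have hlen : (((N - n₀).toNat : ℕ) : ℝ) = N - n₀ := by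
    rw [← Int.cast_natCast, Int.toNat_of_nonneg (by omega), Int.cast_sub]
  have h := Real.sum_range_Gamma_div_Gamma_telescope ha (by positivity : (0 : ℝ) < m + α)
    (N - n₀).toNat
  simp only [mul_div_assoc, ← mul_sub, mul_left_comm _ (Real.Gamma _), ← mul_sum]
  rw [hlen] at h
  convert congrArg (Real.Gamma ((m : ℝ) + α + 1) * ·) h using 4 <;> push_cast <;> ring_nf
end

section
/- For a real number α > 0, Σ_{m ≥ 0} 1/(m+α)³ = Σ_{0 ≤ m₁ < m₂} ((α)_{m₁}/m₁!) · (m₂!/(α)_{m₂}) · 1/((m₁+α)(m₂+α)²). -/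
/-!
Write `w_k = (α)_k / (k! (k+α))` and `c(m, n) = (α+1)_m (α+1)_n / (2α+1)_{m+n}` for the
connector, and sum the nonnegative kernel `w_m w_a c(m, N) / (N+α)`, `N = a+b+1`, in two orders.

Over `b` it telescopes, since `c(m, n) - c(m, n+1) = c(m, n+1) (m+α) / (n+1+α)`, leaving
`w_m G(m) / (m+α)` with `G(m) = ∑_k w_k c(m, k)`. The terms `t_k = w_k c(m, k)` satisfy
`(m+1) t_k - (m+1+α) t'_k = k t_k - (k+1) t_{k+1}` (with `t'` the terms of `G(m+1)`), so
`(m+1+α) G(m+1) = (m+1) G(m)`: this is Gauss's summation theorem up to the constant `G(0)`, and it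
turns the row sums into `α G(0) / (m+α)³`. Since `c` is symmetric, summing over `m` first gives
`w_a G(N) / (N+α)`, which is `α G(0)` times the `(a, N)` term of `ζ(1,2;α)`. The constant `G(0)`
cancels; all that is needed about it is that the series converges, which follows from the ratio
bound `Q_{k+1} / Q_k ≤ 1 + α² / (k+1)²` for `Q_k = t_k (k+α)(k+α+1)`.
-/

open Finset

/-- Pochhammer symbol (α)_m = α(α+1)⋯(α+m−1). -/
noncomputable def rpoch (α : ℝ) (m : ℕ) : ℝ := ∏ i ∈ Finset.range m, (α + i)

open Filter Topology Real Nat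

lemma le_mul_exp_sum_of_succ_le {f y : ℕ → ℝ} (h : ∀ n, f (n + 1) ≤ f n * exp (y n))
    (n : ℕ) :
    f n ≤ f 0 * exp (∑ i ∈ range n, y i) := by
  induction n with
  | zero => simp
  | succ n ih =>
    calc f (n + 1) ≤ f n * exp (y n) := h n
      _ ≤ f 0 * exp (∑ i ∈ range n, y i) * exp (y n) := by gcongr
      _ = f 0 * exp (∑ i ∈ range (n + 1), y i) := by rw [sum_range_succ, exp_add, mul_assoc]

lemma le_mul_exp_tsum_of_succ_le {f y : ℕ → ℝ} (h : ∀ n, f (n + 1) ≤ f n * exp (y n))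
    (hf : 0 ≤ f 0) (hy : ∀ n, 0 ≤ y n) (hys : Summable y) (n : ℕ) :
    f n ≤ f 0 * exp (∑' i, y i) :=
  (le_mul_exp_sum_of_succ_le h n).trans (by gcongr; exact hys.sum_le_tsum _ fun i _ => hy i)

lemma tendsto_zero_of_succ_le_mul_exp_neg {f y : ℕ → ℝ} (hf : ∀ n, 0 ≤ f n)
    (h : ∀ n, f (n + 1) ≤ f n * exp (-y n)) (hy : ∀ n, 0 ≤ y n) (hys : ¬Summable y) :
    Tendsto f atTop (𝓝 0) := by
  have hS : Tendsto (fun n => ∑ i ∈ range n, y i) atTop atTop :=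
    (not_summable_iff_tendsto_nat_atTop_of_nonneg hy).1 hys
  have hbound : Tendsto (fun n => f 0 * exp (∑ i ∈ range n, -y i)) atTop (𝓝 0) := by
    simpa [sum_neg_distrib] using (tendsto_exp_neg_atTop_nhds_zero.comp hS).const_mul (f 0)
  exact squeeze_zero hf (le_mul_exp_sum_of_succ_le h) hbound

lemma tendsto_sum_range_sub_succ {u : ℕ → ℝ} (hu : Tendsto u atTop (𝓝 0)) :
    Tendsto (fun n => ∑ i ∈ range n, (u i - u (i + 1))) atTop (𝓝 (u 0)) := by
  simp_rw [sum_range_sub']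
  simpa using tendsto_const_nhds.sub hu

lemma summable_one_div_nat_add_pow (a : ℝ) {p : ℕ} (hp : 1 < p) :
    Summable fun n : ℕ => 1 / ((n : ℝ) + a) ^ p := by
  refine Summable.of_norm (((summable_one_div_nat_add_rpow a p).2 (by exact_mod_cast hp)).congr
    fun n => ?_)
  rw [norm_div, norm_one, norm_pow, Real.norm_eq_abs, rpow_natCast]

lemma hasSum_prod_of_hasSum_rows_of_nonneg {β γ : Type*} {f : β × γ → ℝ} (hf : 0 ≤ f)
    {g : β → ℝ} {a : ℝ} (hrow : ∀ b, HasSum (fun c => f (b, c)) (g b)) (hg : HasSum g a) :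
    HasSum f a := by
  have hs : Summable f := (summable_prod_of_nonneg hf).2
    ⟨fun b => (hrow b).summable, hg.summable.congr fun b => ((hrow b).tsum_eq).symm⟩
  convert hs.hasSum
  exact ((hs.hasSum.prod_fiberwise hrow).unique hg).symm

lemma hasSum_of_hasSum_rows_of_nonneg {β γ : Type*} {f : β × γ → ℝ} (hf : 0 ≤ f)
    {g : β → ℝ} {h : γ → ℝ} {a : ℝ} (hrow : ∀ b, HasSum (fun c => f (b, c)) (g b))
    (hcol : ∀ c, HasSum (fun b => f (b, c)) (h c)) (hg : HasSum g a) : HasSum h a :=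
  ((Equiv.prodComm γ β).hasSum_iff.2
    (hasSum_prod_of_hasSum_rows_of_nonneg hf hrow hg)).prod_fiberwise hcol

lemma rpoch_succ (α : ℝ) (n : ℕ) : rpoch α (n + 1) = rpoch α n * (α + n) :=
  prod_range_succ _ n

lemma rpoch_pos {α : ℝ} (hα : 0 < α) (n : ℕ) : 0 < rpoch α n :=
  prod_pos fun i _ => by positivity

lemma rpoch_mul_add (α : ℝ) (n : ℕ) : rpoch α n * (α + n) = α * rpoch (α + 1) n := by
  induction n with
  | zero => simp [rpoch]
  | succ n ih =>
    rw [rpoch_succ, rpoch_succ]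
    push_cast
    linear_combination (α + 1 + n) * ih

namespace HurwitzDuality

variable {α : ℝ}

noncomputable def connector (α : ℝ) (m n : ℕ) : ℝ :=
  rpoch (α + 1) m * rpoch (α + 1) n / rpoch (2 * α + 1) (m + n)

lemma connector_pos (hα : 0 < α) (m n : ℕ) : 0 < connector α m n :=
  div_pos (mul_pos (rpoch_pos (by linarith) m) (rpoch_pos (by linarith) n))
    (rpoch_pos (by linarith) _)

lemma connector_comm (α : ℝ) (m n : ℕ) : connector α m n = connector α n m := by
  rw [connector, connector, add_comm m n, mul_comm]

lemma connector_succ_right (hα : 0 < α) (m n : ℕ) :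
    connector α m (n + 1) * (2 * α + 1 + m + n) = connector α m n * (α + 1 + n) := by
  have h := rpoch_pos (show 0 < 2 * α + 1 by linarith) (m + n)
  rw [connector, connector, ← add_assoc, rpoch_succ, rpoch_succ]
  push_cast
  field_simp
  ring

lemma connector_tendsto_zero (hα : 0 < α) (m : ℕ) :
    Tendsto (connector α m) atTop (𝓝 0) := by
  refine tendsto_zero_of_succ_le_mul_exp_neg (y := fun n => (α + m) / (2 * α + 1 + m + n))
    (fun n => (connector_pos hα m n).le) (fun n => ?_) (fun n => by positivity) fun hs => ?_
  · have hD : (0 : ℝ) < 2 * α + 1 + m + n := by positivity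
    calc connector α m (n + 1) = connector α m n * (1 - (α + m) / (2 * α + 1 + m + n)) := by
          field_simp
          linear_combination connector_succ_right hα m n
      _ ≤ connector α m n * exp (-((α + m) / (2 * α + 1 + m + n))) := by
          have := (connector_pos hα m n).le
          gcongr
          linarith [add_one_le_exp (-((α + m) / (2 * α + 1 + m + n)))]
  · have h1 : Summable fun n : ℕ => 1 / |(n : ℝ) + (2 * α + 1 + m)| ^ (1 : ℝ) := by
      refine (hs.mul_left (α + m)⁻¹).congr fun n => ?_
      have : (0 : ℝ) < α + m := by positivity
      rw [rpow_one, abs_of_pos (by positivity)]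
      field_simp
      ring
    exact lt_irrefl _ ((summable_one_div_nat_add_rpow _ 1).1 h1)

lemma hasSum_connector_div (hα : 0 < α) (m a : ℕ) :
    HasSum (fun b => connector α m (a + b + 1) / (((a + b + 1 : ℕ) : ℝ) + α))
      (connector α m a / (m + α)) := by
  set u : ℕ → ℝ := fun b => connector α m (a + b) / (m + α)
  have hterm : ∀ b,
      connector α m (a + b + 1) / (((a + b + 1 : ℕ) : ℝ) + α) = u b - u (b + 1) := by
    intro b
    have hmα : (0 : ℝ) < m + α := by positivity
    have hN : (0 : ℝ) < ((a + b : ℕ) : ℝ) + 1 + α := by positivity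
    have h := connector_succ_right hα m (a + b)
    simp only [u, ← add_assoc]
    push_cast at hN h ⊢
    field_simp
    linear_combination h
  have hu : Tendsto u atTop (𝓝 0) := by
    have h :=
      ((connector_tendsto_zero hα m).comp (tendsto_add_atTop_nat a)).div_const ((m : ℝ) + α)
    rw [zero_div] at h
    exact h.congr fun b => by simp only [u, Function.comp, add_comm b a]
  simp_rw [hterm]
  refine (hasSum_iff_tendsto_nat_of_nonneg (fun b => ?_) _).2 (tendsto_sum_range_sub_succ hu)
  rw [← hterm]
  exact div_nonneg (connector_pos hα m _).le (by positivity)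

noncomputable def weight (α : ℝ) (k : ℕ) : ℝ := rpoch α k / (k ! * (k + α))

noncomputable def gaussTerm (α : ℝ) (m k : ℕ) : ℝ := weight α k * connector α m k

noncomputable def gaussSum (α : ℝ) (m : ℕ) : ℝ := ∑' k, gaussTerm α m k

lemma weight_pos (hα : 0 < α) (k : ℕ) : 0 < weight α k :=
  div_pos (rpoch_pos hα k) (by positivity)

lemma weight_succ (hα : 0 < α) (k : ℕ) :
    weight α (k + 1) * ((k + 1) * (k + 1 + α)) = weight α k * (α + k) ^ 2 := by
  rw [weight, weight, rpoch_succ, factorial_succ]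
  push_cast
  field_simp
  ring

lemma gaussTerm_pos (hα : 0 < α) (m k : ℕ) : 0 < gaussTerm α m k :=
  mul_pos (weight_pos hα k) (connector_pos hα m k)

lemma gaussTerm_succ_right (hα : 0 < α) (m k : ℕ) :
    gaussTerm α m (k + 1) * ((k + 1) * (2 * α + 1 + m + k)) =
      gaussTerm α m k * (α + k) ^ 2 := by
  have hk : (0 : ℝ) < k + 1 + α := by positivity
  apply mul_right_cancel₀ hk.ne'
  simp only [gaussTerm]
  linear_combination (connector α m (k + 1) * (2 * α + 1 + m + k)) * weight_succ hα k +
    (weight α k * (α + k) ^ 2) * connector_succ_right hα m k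

lemma gaussTerm_succ_left (hα : 0 < α) (m k : ℕ) :
    gaussTerm α (m + 1) k * (2 * α + 1 + m + k) = gaussTerm α m k * (α + 1 + m) := by
  simp only [gaussTerm, connector_comm α _ k]
  linear_combination weight α k * connector_succ_right hα k m

lemma gaussTerm_contiguous (hα : 0 < α) (m k : ℕ) :
    (m + 1) * gaussTerm α m k - (m + 1 + α) * gaussTerm α (m + 1) k
      = k * gaussTerm α m k - (k + 1) * gaussTerm α m (k + 1) := by
  have hD : (0 : ℝ) < 2 * α + 1 + m + k := by positivity
  apply mul_right_cancel₀ hD.ne'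
  linear_combination (-(m + 1 + α)) * gaussTerm_succ_left hα m k + gaussTerm_succ_right hα m k

lemma gaussTerm_succ_mul_le (hα : 0 < α) (m k : ℕ) :
    gaussTerm α m (k + 1) * ((((k + 1 : ℕ) : ℝ) + α) * (((k + 1 : ℕ) : ℝ) + α + 1)) ≤
      gaussTerm α m k * ((k + α) * (k + α + 1)) * exp (α ^ 2 / ((k : ℝ) + 1) ^ 2) := by
  set Q := gaussTerm α m k * ((k + α) * (k + α + 1))
  have hQ : 0 ≤ Q := (mul_pos (gaussTerm_pos hα m k) (by positivity)).le
  have hD : (0 : ℝ) < (k + 1) * (2 * α + 1 + m + k) := by positivity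
  have hrec :
      gaussTerm α m (k + 1) * ((((k + 1 : ℕ) : ℝ) + α) * (((k + 1 : ℕ) : ℝ) + α + 1)) =
      Q * ((α + k) * (α + k + 2)) / ((k + 1) * (2 * α + 1 + m + k)) := by
    rw [eq_div_iff hD.ne']
    push_cast
    linear_combination ((k : ℝ) + 1 + α) * (k + 2 + α) * gaussTerm_succ_right hα m k
  have hratio : (α + k) * (α + k + 2) ≤
      (1 + α ^ 2 / ((k : ℝ) + 1) ^ 2) * ((k + 1) * (2 * α + 1 + m + k)) := by
    have h1 : α ^ 2 ≤ α ^ 2 / ((k : ℝ) + 1) ^ 2 * ((k + 1) * (2 * α + 1 + m + k)) := by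
      rw [div_mul_eq_mul_div, le_div_iff₀ (by positivity)]
      have : 0 ≤ α ^ 2 * (k + 1) * (2 * α + m) := by positivity
      nlinarith
    have h2 : (0 : ℝ) ≤ m * (k + 1) := by positivity
    nlinarith
  calc _ = Q * ((α + k) * (α + k + 2)) / ((k + 1) * (2 * α + 1 + m + k)) := hrec
    _ ≤ Q * (1 + α ^ 2 / ((k : ℝ) + 1) ^ 2) := by
        rw [div_le_iff₀ hD, mul_assoc Q]
        exact mul_le_mul_of_nonneg_left hratio hQ
    _ ≤ Q * exp (α ^ 2 / ((k : ℝ) + 1) ^ 2) := by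
        gcongr
        linarith [add_one_le_exp (α ^ 2 / ((k : ℝ) + 1) ^ 2)]

lemma gaussTerm_le (hα : 0 < α) (m : ℕ) :
    ∃ C, ∀ k : ℕ, gaussTerm α m k ≤ C / ((k : ℝ) + α) ^ 2 := by
  have hsum : Summable fun k : ℕ => α ^ 2 / ((k : ℝ) + 1) ^ 2 :=
    ((summable_one_div_nat_add_pow 1 one_lt_two).mul_left (α ^ 2)).congr fun k => mul_one_div _ _
  refine ⟨gaussTerm α m 0 * (α * (α + 1)) * exp (∑' k : ℕ, α ^ 2 / ((k : ℝ) + 1) ^ 2),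
    fun k => ?_⟩
  have hQ := le_mul_exp_tsum_of_succ_le (f := fun k => gaussTerm α m k * ((k + α) * (k + α + 1)))
    (gaussTerm_succ_mul_le hα m) (mul_pos (gaussTerm_pos hα m 0) (by positivity)).le
    (fun k => by positivity) hsum k
  simp only [CharP.cast_eq_zero, zero_add] at hQ
  rw [le_div_iff₀ (by positivity)]
  refine le_trans ?_ hQ
  have := gaussTerm_pos hα m k
  gcongr
  nlinarith

lemma summable_gaussTerm (hα : 0 < α) (m : ℕ) : Summable (gaussTerm α m) := by
  obtain ⟨C, hC⟩ := gaussTerm_le hα m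
  exact .of_nonneg_of_le (fun k => (gaussTerm_pos hα m k).le) hC
    (((summable_one_div_nat_add_pow α one_lt_two).mul_left C).congr fun k => mul_one_div _ _)

lemma tendsto_natCast_mul_gaussTerm (hα : 0 < α) (m : ℕ) :
    Tendsto (fun k : ℕ => k * gaussTerm α m k) atTop (𝓝 0) := by
  obtain ⟨C, hC⟩ := gaussTerm_le hα m
  have hC0 : 0 ≤ C := by
    have := (gaussTerm_pos hα m 0).trans_le (hC 0)
    exact (div_pos_iff_of_pos_right (by positivity)).1 this |>.le
  refine squeeze_zero (fun k => mul_nonneg k.cast_nonneg (gaussTerm_pos hα m k).le) (fun k => ?_)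
    (tendsto_const_div_atTop_nhds_zero_nat C)
  rcases k.eq_zero_or_pos with rfl | hk
  · simp
  have hk' : (0 : ℝ) < k := by exact_mod_cast hk
  calc (k : ℝ) * gaussTerm α m k ≤ k * (C / ((k : ℝ) + α) ^ 2) := by gcongr; exact hC k
    _ ≤ C / k := by
        rw [mul_div_assoc', div_le_div_iff₀ (by positivity) hk']
        have : (k : ℝ) * k ≤ (k + α) ^ 2 := by nlinarith
        nlinarith

lemma gaussSum_succ (hα : 0 < α) (m : ℕ) :
    (m + 1 + α) * gaussSum α (m + 1) = (m + 1) * gaussSum α m := by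
  set u : ℕ → ℝ := fun k => k * gaussTerm α m k
  have hfun : (fun k => u k - u (k + 1)) =
      fun k => (m + 1) * gaussTerm α m k - (m + 1 + α) * gaussTerm α (m + 1) k := by
    funext k
    simp only [u, gaussTerm_contiguous hα m k]
    push_cast
    ring
  have hG : HasSum (fun k => u k - u (k + 1))
      ((m + 1) * gaussSum α m - (m + 1 + α) * gaussSum α (m + 1)) := by
    rw [hfun]
    exact ((summable_gaussTerm hα m).hasSum.mul_left _).sub
      ((summable_gaussTerm hα (m + 1)).hasSum.mul_left _)
  have h0 : HasSum (fun k => u k - u (k + 1)) 0 := by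
    simpa [u] using hG.summable.hasSum_iff_tendsto_nat.2
      (tendsto_sum_range_sub_succ (tendsto_natCast_mul_gaussTerm hα m))
  linarith [hG.unique h0]

lemma gaussSum_mul_rpoch (hα : 0 < α) (m : ℕ) :
    gaussSum α m * rpoch (α + 1) m = gaussSum α 0 * m ! := by
  induction m with
  | zero => simp [rpoch]
  | succ m ih =>
    rw [rpoch_succ, factorial_succ]
    push_cast
    linear_combination rpoch (α + 1) m * gaussSum_succ hα m + (m + 1) * ih

lemma gaussSum_pos (hα : 0 < α) (m : ℕ) : 0 < gaussSum α m :=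
  (gaussTerm_pos hα m 0).trans_le
    ((summable_gaussTerm hα m).le_tsum 0 fun k _ => (gaussTerm_pos hα m k).le)

noncomputable def kernel (α : ℝ) (m a b : ℕ) : ℝ :=
  weight α m * weight α a * connector α m (a + b + 1) /
    ((((a + b + 1 : ℕ) : ℝ) + α) * (α * gaussSum α 0))

lemma kernel_nonneg (hα : 0 < α) (m a b : ℕ) : 0 ≤ kernel α m a b := by
  have := weight_pos hα m
  have := weight_pos hα a
  have := connector_pos hα m (a + b + 1)
  have := gaussSum_pos hα 0
  unfold kernel
  positivity

lemma hasSum_kernel_row (hα : 0 < α) (m : ℕ) :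
    HasSum (fun p : ℕ × ℕ => kernel α m p.1 p.2) (1 / ((m : ℝ) + α) ^ 3) := by
  have hG0 := gaussSum_pos hα 0
  have hmα : (0 : ℝ) < m + α := by positivity
  set c := weight α m / ((m + α) * (α * gaussSum α 0))
  have hrow : ∀ a, HasSum (fun b => kernel α m a b) (c * gaussTerm α m a) := by
    intro a
    have e : c * gaussTerm α m a =
        weight α m * weight α a / (α * gaussSum α 0) * (connector α m a / (m + α)) := by
      simp only [c, gaussTerm]
      field_simp
    rw [e]
    refine ((hasSum_connector_div hα m a).mul_left _).congr_fun fun b => ?_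
    simp only [kernel]
    field_simp
  refine hasSum_prod_of_hasSum_rows_of_nonneg (fun p => kernel_nonneg hα m p.1 p.2) hrow ?_
  have e : 1 / ((m : ℝ) + α) ^ 3 = c * gaussSum α m := by
    have hG := gaussSum_mul_rpoch hα m
    have hP := rpoch_mul_add α m
    have := rpoch_pos (show 0 < α + 1 by linarith) m
    simp only [c, weight]
    field_simp
    linear_combination (-α) * hG - gaussSum α m * hP
  rw [e]
  exact (summable_gaussTerm hα m).hasSum.mul_left c

lemma hasSum_kernel_col (hα : 0 < α) (a b : ℕ) :
    HasSum (fun m => kernel α m a b)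
      ((rpoch α a / (a ! : ℝ)) * (((a + b + 1) ! : ℝ) / rpoch α (a + b + 1)) *
        (1 / (((a : ℝ) + α) * (((a + b + 1 : ℕ) : ℝ) + α) ^ 2))) := by
  have hG0 := gaussSum_pos hα 0
  have hNα : (0 : ℝ) < ((a + b + 1 : ℕ) : ℝ) + α := by positivity
  set c := weight α a / ((((a + b + 1 : ℕ) : ℝ) + α) * (α * gaussSum α 0))
  have e : (rpoch α a / (a ! : ℝ)) * (((a + b + 1) ! : ℝ) / rpoch α (a + b + 1)) *
      (1 / (((a : ℝ) + α) * (((a + b + 1 : ℕ) : ℝ) + α) ^ 2)) =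
        c * gaussSum α (a + b + 1) := by
    have hG := gaussSum_mul_rpoch hα (a + b + 1)
    have hP := rpoch_mul_add α (a + b + 1)
    have := rpoch_pos (show 0 < α + 1 by linarith) (a + b + 1)
    have := rpoch_pos hα (a + b + 1)
    simp only [c, weight]
    field_simp
    linear_combination (-(rpoch α a * α)) * hG - rpoch α a * gaussSum α (a + b + 1) * hP
  rw [e]
  refine ((summable_gaussTerm hα _).hasSum.mul_left c).congr_fun fun m => ?_
  simp only [c, kernel, gaussTerm, connector_comm α (a + b + 1) m]
  field_simp

end HurwitzDuality

open HurwitzDuality in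
/-- Pairs 0 ≤ m₁ < m₂ are parametrized as m₁ = a, m₂ = a+b+1. -/
theorem stmt_16 (α : ℝ) (hα : 0 < α) :
    (∑' m : ℕ, 1 / ((m : ℝ) + α) ^ 3) =
      ∑' a : ℕ, ∑' b : ℕ,
        (rpoch α a / (Nat.factorial a : ℝ)) *
          ((Nat.factorial (a + b + 1) : ℝ) / rpoch α (a + b + 1)) *
          (1 / (((a : ℝ) + α) * (((a + b + 1 : ℕ) : ℝ) + α) ^ 2)) := by
  have h := hasSum_of_hasSum_rows_of_nonneg
    (f := fun q : ℕ × ℕ × ℕ => kernel α q.1 q.2.1 q.2.2) (fun q => kernel_nonneg hα _ _ _)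
    (hasSum_kernel_row hα) (fun p => hasSum_kernel_col hα p.1 p.2)
    (summable_one_div_nat_add_pow α (by norm_num : 1 < 3)).hasSum
  rw [← h.tsum_eq, h.summable.tsum_prod]
end
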